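/- arXiv:2001.05018 — 12 statements merged into one kernel-verified Lean document; each statement's English description precedes it below -/
import Mathlib

section
/- Let L be a Gaussian line (a line in the complex plane containing at least two Gaussian integers), let α₀ = a+bi be the Gaussian integer on L of minimal norm (with larger real part in case of a tie), and for non-vertical L let δ = c+di = α₁ - α₀ where α₁ is the Gaussian integer on L closest to α₀ with Re(α₁) > Re(α₀) (for vertical L set δ = i). Then c and d are relatively prime rational integers, and the Gaussian integers on L are exactly the numbers α₀ + nδ for n ∈ ℤ. -/
/-!
Two points of the line differ by a real multiple of a direction, which for Gaussian integers
is the vanishing of an integer cross product. Dividing the difference of two Gaussian points on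
the line by the gcd of its coordinates gives a primitive step `g`, and Bézout for the coprime
coordinates of `g` shows that the Gaussian points on the line are exactly `α + ℤ g`, starting
from any one of them. Both recipes for `δ` produce `±g`: in the vertical case `g = ±i` by
primitivity, and otherwise `δ = n g` with `n ≠ 0`, while comparing with the neighbour `α₀ ± g`
to the right gives `n² N(g) ≤ N(g)`.
-/

open ComplexConjugate

theorem Complex.im_conj_mul_eq_zero_iff {q : ℂ} (hq : q ≠ 0) (z : ℂ) :
    (conj q * z).im = 0 ↔ ∃ t : ℝ, z = t • q := by
  constructor
  · intro h
    have hn : (Complex.normSq q : ℂ) ≠ 0 := by exact_mod_cast Complex.normSq_pos.mpr hq |>.ne'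
    refine ⟨(conj q * z).re / Complex.normSq q, ?_⟩
    have hreal : conj q * z = ((conj q * z).re : ℂ) := Complex.ext rfl (by simpa using h)
    rw [Complex.real_smul, Complex.ofReal_div, div_mul_eq_mul_div, eq_div_iff hn, ← hreal,
      ← Complex.mul_conj, mul_comm q, ← mul_assoc, mul_comm z]
  · rintro ⟨t, rfl⟩
    simp only [Complex.real_smul, Complex.mul_im, Complex.conj_re, Complex.conj_im,
      Complex.mul_re, Complex.ofReal_re, Complex.ofReal_im]
    ring

theorem mem_line_iff_im_conj_mul_eq_zero {p q a b c z : ℂ}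
    (ha : a ∈ {z : ℂ | ∃ t : ℝ, z = p + t • q}) (hb : b ∈ {z : ℂ | ∃ t : ℝ, z = p + t • q})
    (hab : a ≠ b) (hc : c ∈ {z : ℂ | ∃ t : ℝ, z = p + t • q}) :
    z ∈ {z : ℂ | ∃ t : ℝ, z = p + t • q} ↔ (conj (b - a) * (z - c)).im = 0 := by
  obtain ⟨s, rfl⟩ := ha
  obtain ⟨s', rfl⟩ := hb
  obtain ⟨r, rfl⟩ := hc
  have hq : q ≠ 0 := by rintro rfl; simp at hab
  have hs : s' - s ≠ 0 := sub_ne_zero.mpr fun h => hab (by rw [h])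
  have hcross : (conj (p + s' • q - (p + s • q)) * (z - (p + r • q))).im =
      (s' - s) * (conj q * (z - p)).im := by
    simp only [Complex.real_smul, Complex.mul_im, Complex.conj_re, Complex.conj_im,
      Complex.sub_re, Complex.sub_im, Complex.add_re, Complex.add_im, Complex.mul_re,
      Complex.ofReal_re, Complex.ofReal_im]
    ring
  simp only [Set.mem_ofPred_eq, hcross, mul_eq_zero, hs, false_or,
    Complex.im_conj_mul_eq_zero_iff hq]
  exact exists_congr fun t => sub_eq_iff_eq_add'.symm

theorem IsCoprime.exists_eq_mul_of_mul_eq_mul {R : Type*} [CommRing R] {a b x y : R}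
    (h : IsCoprime a b) (hxy : a * y = b * x) : ∃ n, x = n * a ∧ y = n * b := by
  obtain ⟨u, v, huv⟩ := h
  exact ⟨u * x + v * y, by linear_combination (-x) * huv - v * hxy,
    by linear_combination (-y) * huv + u * hxy⟩

namespace GaussianInt

theorem im_conj_mul (w v : GaussianInt) :
    (conj (w : ℂ) * v).im = ((w.re * v.im - w.im * v.re : ℤ) : ℝ) := by
  simp only [Complex.mul_im, Complex.conj_re, Complex.conj_im, ← intCast_re, ← intCast_im]
  push_cast
  ring

theorem exists_eq_intCast_mul_iff {g : GaussianInt} (hg : IsCoprime g.re g.im)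
    (v : GaussianInt) : (∃ n : ℤ, v = n * g) ↔ g.re * v.im - g.im * v.re = 0 := by
  constructor
  · rintro ⟨n, rfl⟩
    simp only [Zsqrtd.re_mul, Zsqrtd.im_mul, Zsqrtd.re_intCast, Zsqrtd.im_intCast]
    ring
  · intro h
    obtain ⟨n, hre, him⟩ := hg.exists_eq_mul_of_mul_eq_mul (sub_eq_zero.mp h)
    exact ⟨n, Zsqrtd.ext (by simp [hre]) (by simp [him])⟩

theorem exists_isCoprime_mul {w : GaussianInt} (hw : w ≠ 0) :
    ∃ (e : ℤ) (g : GaussianInt), e ≠ 0 ∧ IsCoprime g.re g.im ∧ w = e * g := by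
  have hpos : 0 < Int.gcd w.re w.im := Int.gcd_pos_iff.mpr <| by
    by_contra! h
    exact hw (Zsqrtd.ext h.1 h.2)
  obtain ⟨e, x, y, he, hxy, hx, hy⟩ := Int.exists_gcd_one' hpos
  refine ⟨e, ⟨x, y⟩, by exact_mod_cast he.ne', Int.isCoprime_iff_gcd_eq_one.mpr hxy, ?_⟩
  exact Zsqrtd.ext (by simp [hx, mul_comm]) (by simp [hy, mul_comm])

def IsLineStep (L : Set ℂ) (g : GaussianInt) : Prop :=
  ∀ α β : GaussianInt, (α : ℂ) ∈ L → ((β : ℂ) ∈ L ↔ ∃ n : ℤ, β = α + n * g)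

theorem exists_isLineStep {p q : ℂ} {β₁ β₂ : GaussianInt} (hβ : β₁ ≠ β₂)
    (hβ₁ : (β₁ : ℂ) ∈ {z : ℂ | ∃ t : ℝ, z = p + t • q})
    (hβ₂ : (β₂ : ℂ) ∈ {z : ℂ | ∃ t : ℝ, z = p + t • q}) :
    ∃ g : GaussianInt, IsCoprime g.re g.im ∧ IsLineStep {z : ℂ | ∃ t : ℝ, z = p + t • q} g := by
  obtain ⟨e, g, he, hg, hw⟩ := exists_isCoprime_mul (sub_ne_zero.mpr hβ.symm)
  refine ⟨g, hg, fun α β hα => ?_⟩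
  have hcross : (β₂ - β₁).re * (β - α).im - (β₂ - β₁).im * (β - α).re =
      e * (g.re * (β - α).im - g.im * (β - α).re) := by
    rw [hw]
    simp only [Zsqrtd.re_mul, Zsqrtd.im_mul, Zsqrtd.re_intCast, Zsqrtd.im_intCast]
    ring
  rw [mem_line_iff_im_conj_mul_eq_zero hβ₁ hβ₂ (toComplex_inj.not.mpr hβ) hα, ← toComplex_sub, ← toComplex_sub,
    im_conj_mul, Int.cast_eq_zero, hcross, mul_eq_zero, or_iff_right he,
    ← exists_eq_intCast_mul_iff hg]
  exact exists_congr fun n => sub_eq_iff_eq_add'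

theorem IsLineStep.neg {L : Set ℂ} {g : GaussianInt} (h : IsLineStep L g) :
    IsLineStep L (-g) := fun α β hα =>
  (h α β hα).trans ⟨fun ⟨n, hn⟩ => ⟨-n, by simp [hn]⟩, fun ⟨n, hn⟩ => ⟨-n, by simp [hn]⟩⟩

theorem IsLineStep.eq_or_eq_neg_of_re_eq {L : Set ℂ} {g α : GaussianInt} (h : IsLineStep L g)
    (hg : IsCoprime g.re g.im) (hα : (α : ℂ) ∈ L) (hvert : ∀ z ∈ L, z.re = (α : ℂ).re) :
    (⟨0, 1⟩ : GaussianInt) = g ∨ (⟨0, 1⟩ : GaussianInt) = -g := by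
  have hre : g.re = 0 := by
    have hαg := hvert _ ((h α (α + g) hα).mpr ⟨1, by simp⟩)
    rw [← intCast_re, ← intCast_re, Int.cast_inj, Zsqrtd.re_add] at hαg
    omega
  rw [hre, isCoprime_zero_left, Int.isUnit_iff] at hg
  rcases hg with him | him
  · exact Or.inl (Zsqrtd.ext hre.symm him.symm)
  · exact Or.inr (Zsqrtd.ext (by simp [hre]) (by simp [him]))

theorem IsLineStep.sub_eq_or_eq_neg {L : Set ℂ} {g α₀ α₁ : GaussianInt} (h : IsLineStep L g)
    (hα₀ : (α₀ : ℂ) ∈ L) (hα₁ : (α₁ : ℂ) ∈ L) (hre : α₀.re < α₁.re)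
    (hnear : ∀ β : GaussianInt, (β : ℂ) ∈ L → α₀.re < β.re →
      (α₁ - α₀).norm ≤ (β - α₀).norm) :
    α₁ - α₀ = g ∨ α₁ - α₀ = -g := by
  obtain ⟨n, hn⟩ := (h α₀ α₁ hα₀).mp hα₁
  have hδ : α₁ - α₀ = n * g := by rw [hn]; ring
  have hδre : (α₁ - α₀).re = n * g.re := by rw [hδ]; simp
  have hgre : g.re ≠ 0 := by
    intro h0
    rw [Zsqrtd.re_sub, h0, mul_zero] at hδre
    omega
  have hle : (α₁ - α₀).norm ≤ g.norm := by
    rcases hgre.lt_or_gt with hneg | hpos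
    · simpa using hnear (α₀ - g) ((h α₀ _ hα₀).mpr ⟨-1, by simp; ring⟩) (by simp; omega)
    · simpa using hnear (α₀ + g) ((h α₀ _ hα₀).mpr ⟨1, by simp⟩) (by simp; omega)
  rw [hδ, Zsqrtd.norm_mul, Zsqrtd.norm_intCast] at hle
  have hn : n * n ≤ 1 :=
    le_of_mul_le_mul_right (by simpa using hle) (norm_pos.mpr fun h0 => hgre (by simp [h0]))
  have hn0 : n ≠ 0 := by
    rintro rfl
    rw [Zsqrtd.re_sub, zero_mul] at hδre
    omega
  have : n = 1 ∨ n = -1 := by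
    have : -1 ≤ n ∧ n ≤ 1 := by constructor <;> nlinarith
    omega
  rcases this with rfl | rfl
  · exact Or.inl (by simpa using hδ)
  · exact Or.inr (by simpa using hδ)

end GaussianInt

theorem gaussian_line_parametrization_general
    (L : Set ℂ) (p q : ℂ)
    (hL : L = {z : ℂ | ∃ t : ℝ, z = p + t • q})
    (β₁ β₂ : GaussianInt) (hβ : β₁ ≠ β₂)
    (hβ₁ : GaussianInt.toComplex β₁ ∈ L) (hβ₂ : GaussianInt.toComplex β₂ ∈ L)
    (α₀ δ : GaussianInt)
    (hα₀L : GaussianInt.toComplex α₀ ∈ L)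
    (hδ : ((∀ z ∈ L, z.re = (GaussianInt.toComplex α₀).re) ∧ δ = ⟨0, 1⟩) ∨
      ((¬ ∀ z ∈ L, z.re = (GaussianInt.toComplex α₀).re) ∧
        ∃ α₁ : GaussianInt, GaussianInt.toComplex α₁ ∈ L ∧ α₀.re < α₁.re ∧
          (∀ β : GaussianInt, GaussianInt.toComplex β ∈ L → α₀.re < β.re →
            (α₁ - α₀).norm ≤ (β - α₀).norm) ∧ δ = α₁ - α₀)) :
    Int.gcd δ.re δ.im = 1 ∧
      ∀ β : GaussianInt, GaussianInt.toComplex β ∈ L ↔ ∃ n : ℤ, β = α₀ + n * δ := by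
  subst hL
  obtain ⟨g, hg, hstep⟩ := GaussianInt.exists_isLineStep hβ hβ₁ hβ₂
  have hδg : δ = g ∨ δ = -g := by
    rcases hδ with ⟨hvert, rfl⟩ | ⟨-, α₁, hα₁, hre, hnear, rfl⟩
    · exact hstep.eq_or_eq_neg_of_re_eq hg hα₀L hvert
    · exact hstep.sub_eq_or_eq_neg hα₀L hα₁ hre hnear
  obtain ⟨hδcop, hstepδ⟩ : IsCoprime δ.re δ.im ∧ GaussianInt.IsLineStep _ δ := by
    rcases hδg with rfl | rfl
    · exact ⟨hg, hstep⟩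
    · exact ⟨hg.neg_neg, hstep.neg⟩
  exact ⟨Int.isCoprime_iff_gcd_eq_one.mp hδcop, fun β => hstepδ α₀ β hα₀L⟩

/-- parametrization of a Gaussian line by its base point `α₀` (of minimal
norm, with larger real part in case of a tie) and step `δ`. -/
theorem gaussian_line_parametrization
    (L : Set ℂ) (p q : ℂ) (hq : q ≠ 0)
    (hL : L = {z : ℂ | ∃ t : ℝ, z = p + t • q})
    (β₁ β₂ : GaussianInt) (hβ : β₁ ≠ β₂)
    (hβ₁ : GaussianInt.toComplex β₁ ∈ L) (hβ₂ : GaussianInt.toComplex β₂ ∈ L)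
    (α₀ δ : GaussianInt)
    (hα₀L : GaussianInt.toComplex α₀ ∈ L)
    (hmin : ∀ β : GaussianInt, GaussianInt.toComplex β ∈ L → α₀.norm ≤ β.norm)
    (htie : ∀ β : GaussianInt, GaussianInt.toComplex β ∈ L → β.norm = α₀.norm →
      β ≠ α₀ → β.re < α₀.re)
    (hδ : ((∀ z ∈ L, z.re = (GaussianInt.toComplex α₀).re) ∧ δ = ⟨0, 1⟩) ∨
      ((¬ ∀ z ∈ L, z.re = (GaussianInt.toComplex α₀).re) ∧
        ∃ α₁ : GaussianInt, GaussianInt.toComplex α₁ ∈ L ∧ α₀.re < α₁.re ∧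
          (∀ β : GaussianInt, GaussianInt.toComplex β ∈ L → α₀.re < β.re →
            (α₁ - α₀).norm ≤ (β - α₀).norm) ∧ δ = α₁ - α₀)) :
    Int.gcd δ.re δ.im = 1 ∧
      ∀ β : GaussianInt, GaussianInt.toComplex β ∈ L ↔ ∃ n : ℤ, β = α₀ + n * δ :=
  gaussian_line_parametrization_general L p q hL β₁ β₂ hβ hβ₁ hβ₂ α₀ δ hα₀L hδ
end

section
/- For every Gaussian integer β = x+yi ≠ 0, the smallest positive rational integer divisible by β (in ℤ[i]) equals ν(β) = N(β)/gcd(x,y), and moreover β divides a rational integer r if and only if ν(β) divides r. -/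
/-! Multiplying by the conjugate, `β ∣ r` becomes `N(β) ∣ r · β̄` in `ℤ[i]`, i.e. `N(β) ∣ r x` and
`N(β) ∣ r y`, i.e. `N(β) ∣ r · gcd(x, y)`. Since `gcd(x, y)` divides `N(β) = x² + y²`, this says
exactly `ν(β) ∣ r`, and the least positive such `r` is `ν(β)` itself. -/

theorem dvd_mul_gcd_iff {α : Type*} [CommMonoidWithZero α] [GCDMonoid α] (a b₁ b₂ c : α) :
    a ∣ c * gcd b₁ b₂ ↔ a ∣ c * b₁ ∧ a ∣ c * b₂ := by
  rw [← dvd_gcd_iff, (gcd_mul_left' c b₁ b₂).dvd_iff_dvd_right]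

theorem Int.gcd_dvd_sq_add_sq (x y : ℤ) : (Int.gcd x y : ℤ) ∣ x ^ 2 + y ^ 2 :=
  dvd_add (dvd_pow (Int.gcd_dvd_left x y) two_ne_zero)
    (dvd_pow (Int.gcd_dvd_right x y) two_ne_zero)

namespace Zsqrtd

theorem dvd_intCast_iff {d : ℤ} {β : ℤ√d} (hβ : β.norm ≠ 0) (r : ℤ) :
    β ∣ (r : ℤ√d) ↔ β.norm ∣ r * β.re ∧ β.norm ∣ r * β.im := by
  have hconj : (r * star β).re = r * β.re ∧ (r * star β).im = -(r * β.im) := by simp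
  rw [← dvd_neg (b := r * β.im), ← hconj.1, ← hconj.2, ← intCast_dvd, norm_eq_mul_conj]
  constructor
  · rintro ⟨γ, hγ⟩
    exact ⟨γ, by rw [hγ]; ring⟩
  · rintro ⟨γ, hγ⟩
    refine ⟨γ, Zsqrtd.eq_of_smul_eq_smul_left hβ ?_⟩
    rw [norm_eq_mul_conj]
    linear_combination β * hγ

end Zsqrtd

namespace GaussianInt

theorem norm_mk (x y : ℤ) : (⟨x, y⟩ : GaussianInt).norm = x ^ 2 + y ^ 2 := by
  rw [Zsqrtd.norm_def]
  ring

theorem mk_dvd_intCast_iff {x y : ℤ} (hβ : (⟨x, y⟩ : GaussianInt) ≠ 0) (r : ℤ) :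
    (⟨x, y⟩ : GaussianInt) ∣ (r : GaussianInt) ↔ (x ^ 2 + y ^ 2) / Int.gcd x y ∣ r := by
  have hnorm_ne : (⟨x, y⟩ : GaussianInt).norm ≠ 0 := (norm_pos.mpr hβ).ne'
  have hgcd_ne : (Int.gcd x y : ℤ) ≠ 0 := by
    rw [Int.natCast_ne_zero, Ne, Int.gcd_eq_zero_iff]
    contrapose! hβ
    ext <;> simp [hβ]
  rw [Zsqrtd.dvd_intCast_iff hnorm_ne, Int.ediv_dvd_iff_dvd_mul (Int.gcd_dvd_sq_add_sq x y) hgcd_ne,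
    mul_comm _ r, Int.coe_gcd, dvd_mul_gcd_iff, norm_mk]

end GaussianInt

/-- for a nonzero `β = x + yi`, the least positive rational integer divisible
by `β` is `ν(β) = (x² + y²)/gcd(x, y)`, and `β ∣ r` for a rational integer `r` iff
`ν(β) ∣ r`. -/
theorem nu_least_rational_multiple
    (x y : ℤ) (hβ : (⟨x, y⟩ : GaussianInt) ≠ 0) :
    IsLeast {m : ℤ | 0 < m ∧ (⟨x, y⟩ : GaussianInt) ∣ (m : GaussianInt)}
        ((x ^ 2 + y ^ 2) / Int.gcd x y) ∧
      ∀ r : ℤ, (⟨x, y⟩ : GaussianInt) ∣ (r : GaussianInt) ↔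
        ((x ^ 2 + y ^ 2) / Int.gcd x y : ℤ) ∣ r := by
  have hnorm_pos : 0 < x ^ 2 + y ^ 2 := GaussianInt.norm_mk x y ▸ GaussianInt.norm_pos.mpr hβ
  have hnu_pos : 0 < (x ^ 2 + y ^ 2) / Int.gcd x y :=
    Int.ediv_pos_of_pos_of_dvd hnorm_pos (Int.natCast_nonneg _) (Int.gcd_dvd_sq_add_sq x y)
  refine ⟨⟨⟨hnu_pos, (GaussianInt.mk_dvd_intCast_iff hβ _).mpr dvd_rfl⟩, ?_⟩,
    GaussianInt.mk_dvd_intCast_iff hβ⟩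
  rintro m ⟨hm, hdvd⟩
  exact Int.le_of_dvd hm ((GaussianInt.mk_dvd_intCast_iff hβ m).mp hdvd)
end

section
/- Let L be a primitive Gaussian line with Gaussian integers α_n = α₀ + nδ (α₀, δ relatively prime in ℤ[i]). Suppose β ∈ ℤ[i] divides α_t for some t ∈ ℤ. Then for every n ∈ ℤ, β divides α_n if and only if n ≡ t (mod ν(β)), where ν(x+yi) = (x²+y²)/gcd(x,y). -/
/-!
As `α_t` is coprime to `δ` and `β ∣ α_t`, also `β` is coprime to `δ`; since
`α_n = α_t + (n - t)δ`, this gives `β ∣ α_n ↔ β ∣ n - t`. For a rational integer `m` and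
`β = x + yi`, multiplying by `conj β` turns `β ∣ m` into `x² + y² ∣ m x` and `x² + y² ∣ m y`,
that is `x² + y² ∣ m · gcd(x, y)`, that is `ν(β) ∣ m`.
-/

/-- `ν(x + yi) = (x² + y²)/gcd(x, y)`. -/
def nu (β : GaussianInt) : ℤ := (β.re ^ 2 + β.im ^ 2) / Int.gcd β.re β.im

lemma Int.dvd_mul_and_dvd_mul_iff_dvd_mul_gcd (k m x y : ℤ) :
    k ∣ m * x ∧ k ∣ m * y ↔ k ∣ m * Int.gcd x y := by
  rw [Int.coe_gcd, ← (gcd_mul_left' m x y).dvd_iff_dvd_right]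
  exact (_root_.dvd_gcd_iff k _ _).symm

namespace GaussianInt

lemma norm_eq_sq_add_sq (β : GaussianInt) : β.norm = β.re ^ 2 + β.im ^ 2 := by
  rw [Zsqrtd.norm_def]
  ring

lemma nu_mul_gcd (β : GaussianInt) : nu β * Int.gcd β.re β.im = β.norm := by
  rw [norm_eq_sq_add_sq]
  exact Int.ediv_mul_cancel <| dvd_add (dvd_pow (Int.gcd_dvd_left _ _) two_ne_zero)
    (dvd_pow (Int.gcd_dvd_right _ _) two_ne_zero)

lemma dvd_intCast_iff_nu_dvd (β : GaussianInt) (m : ℤ) : β ∣ (m : GaussianInt) ↔ nu β ∣ m := by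
  rcases eq_or_ne β 0 with rfl | hβ
  · simp [nu]
  have hstar : star β ≠ 0 := star_ne_zero.mpr hβ
  have hgcd : (Int.gcd β.re β.im : ℤ) ≠ 0 := by
    rw [Int.natCast_ne_zero, Ne, Int.gcd_eq_zero_iff]
    exact fun ⟨hre, him⟩ ↦ hβ (Zsqrtd.ext hre him)
  calc β ∣ (m : GaussianInt) ↔ β * star β ∣ m * star β := (mul_dvd_mul_iff_right hstar).symm
    _ ↔ β.norm ∣ m * β.re ∧ β.norm ∣ m * β.im := by
      rw [← Zsqrtd.norm_eq_mul_conj, Zsqrtd.intCast_dvd]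
      simp
    _ ↔ β.norm ∣ m * Int.gcd β.re β.im := Int.dvd_mul_and_dvd_mul_iff_dvd_mul_gcd _ _ _ _
    _ ↔ nu β ∣ m := by rw [← nu_mul_gcd, mul_dvd_mul_iff_right hgcd]

end GaussianInt

theorem gaussian_line_divisibility_periodic_general
    (α₀ δ : GaussianInt) (hcop : IsCoprime α₀ δ)
    (β : GaussianInt) (t : ℤ) (ht : β ∣ (α₀ + (t : GaussianInt) * δ)) :
    ∀ n : ℤ, β ∣ (α₀ + (n : GaussianInt) * δ) ↔ n ≡ t [ZMOD nu β] := by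
  intro n
  have hβδ : IsCoprime β δ := (hcop.add_mul_right_left t).of_isCoprime_of_dvd_left ht
  have hαn : α₀ + (n : GaussianInt) * δ = (α₀ + t * δ) + ((n - t : ℤ) : GaussianInt) * δ := by
    push_cast
    ring
  have hβ : β ∣ ((n - t : ℤ) : GaussianInt) * δ ↔ β ∣ ((n - t : ℤ) : GaussianInt) :=
    ⟨hβδ.dvd_of_dvd_mul_right, (Dvd.dvd.mul_right · δ)⟩
  rw [hαn, dvd_add_right ht, hβ, GaussianInt.dvd_intCast_iff_nu_dvd, Int.modEq_comm,
    Int.modEq_iff_dvd]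

/-- periodicity of divisibility on a primitive Gaussian line: if `β ∣ α_t`
then `β ∣ α_n` iff `n ≡ t (mod ν(β))`. -/
theorem gaussian_line_divisibility_periodic
    (α₀ δ : GaussianInt) (hcd : Int.gcd δ.re δ.im = 1) (hcop : IsCoprime α₀ δ)
    (β : GaussianInt) (t : ℤ) (ht : β ∣ (α₀ + (t : GaussianInt) * δ)) :
    ∀ n : ℤ, β ∣ (α₀ + (n : GaussianInt) * δ) ↔ n ≡ t [ZMOD nu β] :=
  gaussian_line_divisibility_periodic_general α₀ δ hcop β t ht
end

section
/- Let L be a primitive Gaussian line with α_n = α₀ + nδ. If β ∈ ℤ[i] divides some α_s and γ ∈ ℤ[i] divides some α_t, and if ν(β) and ν(γ) are relatively prime rational integers, then βγ divides some α_n. -/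
-- Also for `β = 0`, where `g = 0` and `ν(β) = 0 / 0 = 0`.
lemma nu_eq_gcd_mul {β : GaussianInt} {r m : ℤ} (hr : β.re = Int.gcd β.re β.im * r)
    (hm : β.im = Int.gcd β.re β.im * m) : nu β = Int.gcd β.re β.im * (r ^ 2 + m ^ 2) := by
  set g : ℤ := (Int.gcd β.re β.im : ℤ)
  have hsum : β.re ^ 2 + β.im ^ 2 = g * (g * (r ^ 2 + m ^ 2)) := by rw [hr, hm]; ring
  rw [nu, hsum]
  rcases eq_or_ne g 0 with hg | hg
  · simp [hg]
  · exact Int.mul_ediv_cancel_left _ hg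

lemma dvd_nu (β : GaussianInt) : β ∣ (nu β : GaussianInt) := by
  obtain ⟨r, hr⟩ := Int.gcd_dvd_left β.re β.im
  obtain ⟨m, hm⟩ := Int.gcd_dvd_right β.re β.im
  have hnu := nu_eq_gcd_mul hr hm
  generalize (Int.gcd β.re β.im : ℤ) = g at hr hm hnu
  refine ⟨⟨r, -m⟩, ?_⟩
  ext
  · simp only [Zsqrtd.re_intCast, Zsqrtd.re_mul, hnu, hr, hm]; ring
  · simp only [Zsqrtd.im_intCast, Zsqrtd.im_mul, hr, hm]; ring

lemma dvd_add_intCast_mul_of_dvd_sub {R : Type*} [CommRing R] {β α₀ δ : R} {m s n : ℤ}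
    (hs : β ∣ α₀ + s * δ) (hm : β ∣ (m : R)) (hmn : m ∣ n - s) : β ∣ α₀ + n * δ := by
  obtain ⟨k, hk⟩ := hmn
  have hline : α₀ + n * δ = (α₀ + s * δ) + (m : R) * (k * δ) := by
    rw [show n = s + m * k by omega]; push_cast; ring
  rw [hline]
  exact dvd_add hs (dvd_mul_of_dvd_left hm _)

lemma Int.exists_dvd_sub_and_dvd_sub {p q : ℤ} (h : IsCoprime p q) (s t : ℤ) :
    ∃ n : ℤ, p ∣ n - s ∧ q ∣ n - t := by
  obtain ⟨a, b, hab⟩ := h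
  refine ⟨s * (b * q) + t * (a * p), ⟨a * (t - s), ?_⟩, ⟨b * (s - t), ?_⟩⟩
  · linear_combination s * hab
  · linear_combination t * hab

lemma isCoprime_of_dvd_intCast {R : Type*} [CommRing R] {β γ : R} {p q : ℤ}
    (hpq : IsCoprime p q) (hβ : β ∣ (p : R)) (hγ : γ ∣ (q : R)) : IsCoprime β γ :=
  ((hpq.map (Int.castRingHom R)).of_isCoprime_of_dvd_left hβ).of_isCoprime_of_dvd_right hγ

theorem gaussian_line_divisor_mul_general
    (α₀ δ : GaussianInt)
    (β γ : GaussianInt) (s t : ℤ)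
    (hβ : β ∣ (α₀ + (s : GaussianInt) * δ)) (hγ : γ ∣ (α₀ + (t : GaussianInt) * δ))
    (hν : IsCoprime (nu β) (nu γ)) :
    ∃ n : ℤ, β * γ ∣ (α₀ + (n : GaussianInt) * δ) := by
  obtain ⟨n, hns, hnt⟩ := Int.exists_dvd_sub_and_dvd_sub hν s t
  refine ⟨n, (isCoprime_of_dvd_intCast hν (dvd_nu β) (dvd_nu γ)).mul_dvd ?_ ?_⟩
  · exact dvd_add_intCast_mul_of_dvd_sub hβ (dvd_nu β) hns
  · exact dvd_add_intCast_mul_of_dvd_sub hγ (dvd_nu γ) hnt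

/-- if `β` and `γ` each divide some Gaussian integer on a primitive Gaussian
line and `ν(β)`, `ν(γ)` are relatively prime, then `βγ` divides some Gaussian integer on
the line. -/
theorem gaussian_line_divisor_mul
    (α₀ δ : GaussianInt) (hcd : Int.gcd δ.re δ.im = 1) (hcop : IsCoprime α₀ δ)
    (β γ : GaussianInt) (s t : ℤ)
    (hβ : β ∣ (α₀ + (s : GaussianInt) * δ)) (hγ : γ ∣ (α₀ + (t : GaussianInt) * δ))
    (hν : IsCoprime (nu β) (nu γ)) :
    ∃ n : ℤ, β * γ ∣ (α₀ + (n : GaussianInt) * δ) :=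
  gaussian_line_divisor_mul_general α₀ δ β γ s t hβ hγ hν
end

section
/- Let L be a primitive Gaussian line with α₀ = a+bi, δ = c+di, and Δ = ad - bc. A rational integer r divides some Gaussian integer α_n = α₀ + nδ on L (as an element of ℤ[i]) if and only if r divides Δ. -/
theorem dvd_mul_sub_mul_of_dvd_add_mul {R : Type*} [CommRing R] {a b c d r n : R}
    (ha : r ∣ a + n * c) (hb : r ∣ b + n * d) : r ∣ a * d - b * c := by
  have h : a * d - b * c = d * (a + n * c) - c * (b + n * d) := by ring
  rw [h]
  exact dvd_sub (dvd_mul_of_dvd_right ha d) (dvd_mul_of_dvd_right hb c)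

/-- With `u * c + v * d = 1`, the parameter `n = -(u * a + v * b)` moves `(a, b)` to
`(v * Δ, -u * Δ)` where `Δ = a * d - b * c`. -/
theorem exists_dvd_add_mul_of_dvd_mul_sub_mul {R : Type*} [CommRing R] {a b c d r : R}
    (hcd : IsCoprime c d) (hr : r ∣ a * d - b * c) :
    ∃ n, r ∣ a + n * c ∧ r ∣ b + n * d := by
  obtain ⟨u, v, huv⟩ := hcd
  refine ⟨-(u * a + v * b), ?_, ?_⟩
  · have h : a + -(u * a + v * b) * c = v * (a * d - b * c) + a * (1 - (u * c + v * d)) := by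
      ring
    rw [h, huv, sub_self, mul_zero, add_zero]
    exact dvd_mul_of_dvd_right hr v
  · have h : b + -(u * a + v * b) * d = -u * (a * d - b * c) + b * (1 - (u * c + v * d)) := by
      ring
    rw [h, huv, sub_self, mul_zero, add_zero]
    exact dvd_mul_of_dvd_right hr (-u)

theorem exists_dvd_add_mul_iff_dvd_mul_sub_mul {R : Type*} [CommRing R] {a b c d r : R}
    (hcd : IsCoprime c d) :
    (∃ n, r ∣ a + n * c ∧ r ∣ b + n * d) ↔ r ∣ a * d - b * c :=
  ⟨fun ⟨_, ha, hb⟩ ↦ dvd_mul_sub_mul_of_dvd_add_mul ha hb,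
    exists_dvd_add_mul_of_dvd_mul_sub_mul hcd⟩

theorem GaussianInt.intCast_dvd_mk_add_mul_mk (r a b c d n : ℤ) :
    (r : GaussianInt) ∣ (⟨a, b⟩ : GaussianInt) + (n : GaussianInt) * ⟨c, d⟩ ↔
      r ∣ a + n * c ∧ r ∣ b + n * d := by
  rw [Zsqrtd.intCast_dvd]
  simp

theorem gaussian_line_rational_divisor_iff_general
    (a b c d : ℤ) (hcd : Int.gcd c d = 1) (r : ℤ) :
    (∃ n : ℤ, (r : GaussianInt) ∣ ((⟨a, b⟩ : GaussianInt) + (n : GaussianInt) * ⟨c, d⟩)) ↔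
      r ∣ (a * d - b * c) := by
  simp only [GaussianInt.intCast_dvd_mk_add_mul_mk]
  exact exists_dvd_add_mul_iff_dvd_mul_sub_mul (Int.isCoprime_iff_gcd_eq_one.mpr hcd)

/-- a rational integer `r` divides some Gaussian integer on a primitive
Gaussian line iff `r` divides `Δ = ad - bc`. -/
theorem gaussian_line_rational_divisor_iff
    (a b c d : ℤ) (hcd : Int.gcd c d = 1)
    (hcop : IsCoprime (⟨a, b⟩ : GaussianInt) (⟨c, d⟩ : GaussianInt)) (r : ℤ) :
    (∃ n : ℤ, (r : GaussianInt) ∣ ((⟨a, b⟩ : GaussianInt) + (n : GaussianInt) * ⟨c, d⟩)) ↔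
      r ∣ (a * d - b * c) :=
  gaussian_line_rational_divisor_iff_general a b c d hcd r
end

section
/- Let L be a primitive Gaussian line with α_n = α₀ + nδ, and let π be a Gaussian prime that is not a rational integer (i.e., not an associate of a rational prime). Then π divides some α_n if and only if π does not divide δ. -/
/-!
Modulo a prime `π = a + b i` that is not associated to a rational integer, `a` and `b` are
coprime, so `b` is invertible modulo the norm `a² + b² = π π̄` and hence modulo `π`; then
`b i ≡ -a` makes `i`, and with it every Gaussian integer, congruent to a rational integer.
If `π ∤ δ`, write `u π + v δ = 1` and pick `n ≡ -α₀ v (mod π)`: then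
`α₀ + n δ ≡ α₀ (1 - v δ) ≡ 0`. Conversely `π ∣ δ` and `π ∣ α₀ + n δ` would make `π` a common
divisor of the coprime `α₀` and `δ`.
-/

namespace Zsqrtd

variable {d : ℤ}

theorem isCoprime_re_im_of_irreducible {π : ℤ√d} (hπ : Irreducible π)
    (hπℤ : ¬∃ m : ℤ, Associated π (m : ℤ√d)) : IsCoprime π.re π.im := by
  obtain ⟨b, hπb, hb⟩ := exists_coprime_of_gcd_pos ((gcd_pos_iff π).mpr hπ.ne_zero)
  rcases hπ.isUnit_or_isUnit hπb with hg | hb_unit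
  · refine isCoprime_of_dvd_isCoprime hb ?_
    rw [hπb]
    exact (associated_unit_mul_left b _ hg).dvd
  · exact absurd ⟨_, hπb ▸ associated_mul_unit_left _ _ hb_unit⟩ hπℤ

theorem exists_dvd_sqrtd_sub_intCast {π : ℤ√d} (hπ : IsCoprime π.re π.im) :
    ∃ e : ℤ, π ∣ sqrtd - (e : ℤ√d) := by
  have hnorm : IsCoprime π.im π.norm := by
    have h := (hπ.symm.mul_right hπ.symm).add_mul_left_right (-d * π.im)
    rwa [norm_def, show π.re * π.re - d * π.im * π.im = π.re * π.re + π.im * (-d * π.im) by ring]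
  obtain ⟨c, v, hcv⟩ := hnorm
  -- `π.im * sqrtd ≡ -π.re (mod π)` and `c` inverts `π.im` modulo `π.norm = π * star π`
  refine ⟨-(c * π.re), ⟨(c : ℤ√d) + (v : ℤ√d) * star π * sqrtd, ?_⟩⟩
  have hcv' : (c : ℤ√d) * (π.im : ℤ√d) + (v : ℤ√d) * (π * star π) = 1 := by
    rw [← norm_eq_mul_conj]; exact_mod_cast hcv
  have hπ_eq : π = (π.re : ℤ√d) + sqrtd * (π.im : ℤ√d) := decompose
  push_cast
  linear_combination (-(c : ℤ√d)) * hπ_eq - sqrtd * hcv'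

theorem exists_dvd_sub_intCast_of_dvd_sqrtd_sub {π : ℤ√d} {e : ℤ}
    (he : π ∣ sqrtd - (e : ℤ√d)) (ζ : ℤ√d) : ∃ m : ℤ, π ∣ ζ - (m : ℤ√d) := by
  refine ⟨ζ.re + e * ζ.im, ?_⟩
  have hζ : ζ = (ζ.re : ℤ√d) + sqrtd * (ζ.im : ℤ√d) := decompose
  have hsplit : ζ - ((ζ.re + e * ζ.im : ℤ) : ℤ√d) = (ζ.im : ℤ√d) * (sqrtd - (e : ℤ√d)) := by
    push_cast
    linear_combination hζ
  exact hsplit ▸ he.mul_left _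

theorem exists_dvd_sub_intCast {π : ℤ√d} (hπ : Irreducible π)
    (hπℤ : ¬∃ m : ℤ, Associated π (m : ℤ√d)) (ζ : ℤ√d) : ∃ m : ℤ, π ∣ ζ - (m : ℤ√d) :=
  have ⟨_, he⟩ := exists_dvd_sqrtd_sub_intCast (isCoprime_re_im_of_irreducible hπ hπℤ)
  exists_dvd_sub_intCast_of_dvd_sqrtd_sub he ζ

end Zsqrtd

theorem exists_dvd_add_intCast_mul_of_isCoprime {R : Type*} [CommRing R] {π δ : R}
    (hπ : ∀ ζ : R, ∃ m : ℤ, π ∣ ζ - (m : R)) (hπδ : IsCoprime π δ) (α₀ : R) :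
    ∃ n : ℤ, π ∣ α₀ + (n : R) * δ := by
  obtain ⟨u, v, huv⟩ := hπδ
  obtain ⟨n, hn⟩ := hπ (-(α₀ * v))
  refine ⟨n, ?_⟩
  have hsplit : α₀ + (n : R) * δ = u * α₀ * π - (-(α₀ * v) - n) * δ := by
    linear_combination (-α₀) * huv
  rw [hsplit]
  exact dvd_sub (dvd_mul_left π _) (hn.mul_right δ)

theorem not_dvd_of_dvd_add_mul_of_isCoprime {R : Type*} [CommRing R] {π α₀ δ n : R}
    (hπ : ¬IsUnit π) (hcop : IsCoprime α₀ δ) (hn : π ∣ α₀ + n * δ) : ¬π ∣ δ := fun hδ =>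
  hπ (hcop.isUnit_of_dvd' ((dvd_add_left (hδ.mul_left n)).mp hn) hδ)

theorem gaussian_line_prime_divisor_iff_general
    (α₀ δ : GaussianInt) (hcop : IsCoprime α₀ δ)
    (π : GaussianInt) (hπ : Prime π) (hnotrat : ¬ ∃ m : ℤ, Associated π (m : GaussianInt)) :
    (∃ n : ℤ, π ∣ (α₀ + (n : GaussianInt) * δ)) ↔ ¬ π ∣ δ := by
  constructor
  · rintro ⟨n, hn⟩
    exact not_dvd_of_dvd_add_mul_of_isCoprime hπ.not_isUnit hcop hn
  · intro hδ
    exact exists_dvd_add_intCast_mul_of_isCoprime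
      (Zsqrtd.exists_dvd_sub_intCast hπ.irreducible hnotrat)
      (hπ.coprime_iff_not_dvd.mpr hδ) α₀

/-- a non-rational Gaussian prime `π` divides some Gaussian integer on a
primitive Gaussian line iff `π` does not divide `δ`. -/
theorem gaussian_line_prime_divisor_iff
    (α₀ δ : GaussianInt) (hcd : Int.gcd δ.re δ.im = 1) (hcop : IsCoprime α₀ δ)
    (π : GaussianInt) (hπ : Prime π) (hnotrat : ¬ ∃ m : ℤ, Associated π (m : GaussianInt)) :
    (∃ n : ℤ, π ∣ (α₀ + (n : GaussianInt) * δ)) ↔ ¬ π ∣ δ :=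
  gaussian_line_prime_divisor_iff_general α₀ δ hcop π hπ hnotrat
end

section
/- Let L be a primitive Gaussian line with α_n = α₀ + nδ. Suppose μ₁, …, μ_k are Gaussian integers each dividing some Gaussian integer on L, such that ν(μ₁), …, ν(μ_k) are pairwise relatively prime rational integers, and let b₁, …, b_k be arbitrary rational integers. Then there exists a rational integer t, unique modulo ν(μ₁)ν(μ₂)⋯ν(μ_k), such that μ_j divides α_{t+b_j} for all 1 ≤ j ≤ k. -/
open Finset

/-!
Multiplying by `conj μ` shows that a rational integer `m` is divisible by `μ` exactly when `N(μ)`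
divides both `m · re μ` and `m · im μ`, i.e. when `ν(μ) = N(μ) / gcd(re μ, im μ)` divides `m`.
If `μ` divides a point `α₀ + nδ` of the line then `μ` is coprime to `δ`, so `μ ∣ α₀ + mδ` iff
`μ ∣ m - n` in `ℤ[i]`, iff `m ≡ n [ZMOD ν(μ)]`. The theorem is then the Chinese remainder theorem
in `ℤ` for the moduli `ν(μⱼ)`.
-/

theorem Int.sq_add_sq_div_gcd_dvd_iff {x y : ℤ} (h : x ≠ 0 ∨ y ≠ 0) (m : ℤ) :
    (x ^ 2 + y ^ 2) / Int.gcd x y ∣ m ↔ x ^ 2 + y ^ 2 ∣ x * m ∧ x ^ 2 + y ^ 2 ∣ y * m := by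
  have hg : (Int.gcd x y : ℤ) ≠ 0 := by exact_mod_cast (Int.gcd_pos_iff.2 h).ne'
  have hgN : (Int.gcd x y : ℤ) ∣ x ^ 2 + y ^ 2 :=
    dvd_add ((Int.gcd_dvd_left x y).trans (dvd_pow_self x two_ne_zero))
      ((Int.gcd_dvd_right x y).trans (dvd_pow_self y two_ne_zero))
  rw [Int.ediv_dvd_iff_dvd_mul hgN hg, ← Int.dvd_coe_gcd_iff, Int.gcd_mul_right,
    Nat.cast_mul, Int.natCast_natAbs, ← dvd_abs, abs_mul, Nat.abs_cast]

theorem nu_dvd_iff_dvd_intCast (μ : GaussianInt) (m : ℤ) : nu μ ∣ m ↔ μ ∣ (m : GaussianInt) := by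
  rcases eq_or_ne μ 0 with rfl | hμ
  · simp [nu]
  have hre : μ.re ≠ 0 ∨ μ.im ≠ 0 := by
    by_contra! hc
    exact hμ (Zsqrtd.ext hc.1 hc.2)
  have hnorm : star μ * μ = ((μ.re ^ 2 + μ.im ^ 2 : ℤ) : GaussianInt) := by
    rw [mul_comm, ← Zsqrtd.norm_eq_mul_conj, Zsqrtd.norm_def]
    push_cast
    ring
  rw [← mul_dvd_mul_iff_left (star_ne_zero.mpr hμ), hnorm, Zsqrtd.intCast_dvd, nu,
    Int.sq_add_sq_div_gcd_dvd_iff hre]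
  simp [Zsqrtd.re_mul, Zsqrtd.im_mul]

theorem dvd_add_mul_iff_of_isCoprime {R : Type*} [CommRing R] {μ a δ : R} (h : IsCoprime μ δ)
    (ha : μ ∣ a) (c : R) : μ ∣ a + c * δ ↔ μ ∣ c :=
  (dvd_add_right ha).trans ⟨h.dvd_of_dvd_mul_right, (Dvd.dvd.mul_right · δ)⟩

theorem exists_forall_dvd_sub_of_pairwise_isCoprime {R ι : Type*} [CommRing R] [Finite ι]
    {m : ι → R} (hm : Pairwise fun i j ↦ IsCoprime (m i) (m j)) (r : ι → R) :
    ∃ t, ∀ i, m i ∣ t - r i := by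
  obtain ⟨t, ht⟩ := Ideal.exists_forall_sub_mem_ideal (I := fun i ↦ Ideal.span {m i})
    (fun i j hij ↦ (Ideal.isCoprime_span_singleton_iff _ _).2 (hm hij)) r
  exact ⟨t, fun i ↦ Ideal.mem_span_singleton.1 (ht i)⟩

theorem dvd_add_mul_iff_modEq_nu {α₀ δ μ : GaussianInt} (hcop : IsCoprime α₀ δ) {n : ℤ}
    (hn : μ ∣ α₀ + n * δ) (m : ℤ) : μ ∣ α₀ + m * δ ↔ m ≡ n [ZMOD nu μ] := by
  have hμδ : IsCoprime μ δ :=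
    (hcop.add_mul_right_left (n : GaussianInt)).of_isCoprime_of_dvd_left hn
  have hshift : α₀ + m * δ = α₀ + n * δ + ((m - n : ℤ) : GaussianInt) * δ := by push_cast; ring
  rw [hshift, dvd_add_mul_iff_of_isCoprime hμδ hn, ← nu_dvd_iff_dvd_intCast, Int.modEq_comm,
    Int.modEq_iff_dvd]

theorem gaussian_line_crt_general
    (α₀ δ : GaussianInt) (hcop : IsCoprime α₀ δ)
    (k : ℕ) (μ : Fin k → GaussianInt) (b : Fin k → ℤ)
    (hdvd : ∀ j, ∃ n : ℤ, μ j ∣ (α₀ + (n : GaussianInt) * δ))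
    (hν : ∀ i j, i ≠ j → IsCoprime (nu (μ i)) (nu (μ j))) :
    ∃ t : ℤ, (∀ j, μ j ∣ (α₀ + ((t + b j : ℤ) : GaussianInt) * δ)) ∧
      ∀ t' : ℤ, (∀ j, μ j ∣ (α₀ + ((t' + b j : ℤ) : GaussianInt) * δ)) →
        t' ≡ t [ZMOD ∏ j, nu (μ j)] := by
  choose n hn using hdvd
  have hline j (m : ℤ) := dvd_add_mul_iff_modEq_nu hcop (hn j) m
  obtain ⟨t, ht⟩ := exists_forall_dvd_sub_of_pairwise_isCoprime (m := fun j ↦ nu (μ j))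
    (fun i j ↦ hν i j) (fun j ↦ n j - b j)
  have hsol : ∀ j, μ j ∣ α₀ + ((t + b j : ℤ) : GaussianInt) * δ := fun j ↦
    (hline j _).2 (Int.modEq_of_dvd (by simpa only [sub_sub_eq_add_sub] using ht j)).symm
  refine ⟨t, hsol, fun t' ht' ↦ Int.modEq_of_dvd ?_⟩
  refine Finset.prod_dvd_of_coprime (fun i _ j _ hij ↦ hν i j hij) fun j _ ↦ Int.ModEq.dvd ?_
  exact Int.ModEq.add_right_cancel' (b j)
    (((hline j _).1 (ht' j)).trans ((hline j _).1 (hsol j)).symm)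

/-- CRT for Gaussian lines. -/
theorem gaussian_line_crt
    (α₀ δ : GaussianInt) (hcd : Int.gcd δ.re δ.im = 1) (hcop : IsCoprime α₀ δ)
    (k : ℕ) (μ : Fin k → GaussianInt) (b : Fin k → ℤ)
    (hdvd : ∀ j, ∃ n : ℤ, μ j ∣ (α₀ + (n : GaussianInt) * δ))
    (hν : ∀ i j, i ≠ j → IsCoprime (nu (μ i)) (nu (μ j))) :
    ∃ t : ℤ, (∀ j, μ j ∣ (α₀ + ((t + b j : ℤ) : GaussianInt) * δ)) ∧
      ∀ t' : ℤ, (∀ j, μ j ∣ (α₀ + ((t' + b j : ℤ) : GaussianInt) * δ)) →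
        t' ≡ t [ZMOD ∏ j, nu (μ j)] :=
  gaussian_line_crt_general α₀ δ hcop k μ b hdvd hν
end

section
/- Let L be a primitive Gaussian line with Δ = ad - bc ≠ 0, and let π be a Gaussian prime lying over a rational prime p ≡ 1 (mod 4). If π^k divides some Gaussian integer α_m on L for some k ≥ 1, then for every positive integer r there exists n ∈ ℤ such that π^r exactly divides α_n (i.e., π^r ∣ α_n but π^{r+1} ∤ α_n). -/
/-!
Since `p ≡ 1 (mod 4)`, `-1` is a square modulo `p`, hence by Hensel's lemma modulo every
`p ^ s`: `p ^ s ∣ u ^ 2 + 1 = (u + i) (u - i)`. As `π ∤ 2`, the prime `π` divides only one of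
the two factors, so `π ^ s ∣ i - w` for an integer `w`, and every residue class modulo `π ^ s`
contains a rational integer. Coprimality of `α₀` and `δ` together with `π ∣ α_m` gives `π ∤ δ`;
so `δ` is invertible modulo `π ^ (r + 1)` and `α₀ + n δ ≡ π ^ r (mod π ^ (r + 1))` is solvable
with `n ∈ ℤ`.
-/

open Polynomial Zsqrtd

theorem PadicInt.exists_sq_add_one_eq_zero {p : ℕ} [hp : Fact p.Prime] (hp1 : p % 4 = 1) :
    ∃ z : ℤ_[p], z ^ 2 + 1 = 0 := by
  obtain ⟨y, hy⟩ := ZMod.exists_sq_eq_neg_one_iff (p := p) |>.mpr (by omega)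
  set u : ℤ := (y.val : ℤ)
  have hyu : (u : ZMod p) = y := by simp [u]
  have hp_dvd : (p : ℤ) ∣ u ^ 2 + 1 := by
    rw [← ZMod.intCast_zmod_eq_zero_iff_dvd]
    push_cast
    rw [hyu, sq, ← hy, neg_add_cancel]
  have hp_not_dvd : ¬(p : ℤ) ∣ 2 * u := by
    rw [← ZMod.intCast_zmod_eq_zero_iff_dvd]
    push_cast
    rw [hyu]
    intro h
    have h2 : ((2 : ℕ) : ZMod p) = 0 := by linear_combination (-y) * h - 2 * hy
    have := Nat.le_of_dvd two_pos ((ZMod.natCast_eq_zero_iff 2 p).mp h2)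
    have := hp.out.two_le
    omega
  have hF : (X ^ 2 + 1 : ℤ[X]).aeval (u : ℤ_[p]) = ((u ^ 2 + 1 : ℤ) : ℤ_[p]) := by simp
  have hF' : (X ^ 2 + 1 : ℤ[X]).derivative.aeval (u : ℤ_[p]) = ((2 * u : ℤ) : ℤ_[p]) := by
    simp [map_ofNat]
  have hF'_norm : ‖((2 * u : ℤ) : ℤ_[p])‖ = 1 :=
    le_antisymm (norm_le_one _) (not_lt.mp ((norm_int_lt_one_iff_dvd _).not.mpr hp_not_dvd))
  have hnorm : ‖(X ^ 2 + 1 : ℤ[X]).aeval (u : ℤ_[p])‖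
      < ‖(X ^ 2 + 1 : ℤ[X]).derivative.aeval (u : ℤ_[p])‖ ^ 2 := by
    rw [hF, hF', hF'_norm, one_pow]
    exact (norm_int_lt_one_iff_dvd _).mpr hp_dvd
  obtain ⟨z, hz, -⟩ := hensels_lemma hnorm
  exact ⟨z, by simpa using hz⟩

theorem Int.exists_sq_add_one_dvd_prime_pow {p : ℕ} [Fact p.Prime] (hp1 : p % 4 = 1) (s : ℕ) :
    ∃ u : ℤ, (p : ℤ) ^ s ∣ u ^ 2 + 1 := by
  obtain ⟨z, hz⟩ := PadicInt.exists_sq_add_one_eq_zero hp1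
  refine ⟨(PadicInt.toZModPow s z).val, ?_⟩
  rw [← Nat.cast_pow, ← ZMod.intCast_zmod_eq_zero_iff_dvd]
  push_cast
  rw [ZMod.natCast_zmod_val]
  simpa using congrArg (PadicInt.toZModPow s) hz

namespace GaussianInt

local notation "ℤ[i]" => GaussianInt

theorem not_dvd_two_of_dvd_odd_prime {p : ℕ} (hp : p.Prime) (hp2 : p ≠ 2) {π : ℤ[i]}
    (hπ : ¬IsUnit π) (hπp : π ∣ p) : ¬π ∣ 2 := by
  have hcop : IsCoprime (p : ℤ) 2 := by
    rw [Int.isCoprime_iff_gcd_eq_one]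
    exact Nat.Coprime.gcd_eq_one ((Nat.coprime_primes hp Nat.prime_two).mpr hp2)
  have hcop' : IsCoprime (p : ℤ[i]) 2 := by
    simpa using hcop.map (Int.castRingHom ℤ[i])
  exact fun h2 => hπ (hcop'.isUnit_of_dvd' hπp h2)

theorem exists_int_pow_dvd_sqrtd_sub {π : ℤ[i]} (hπ : Prime π) (hπ2 : ¬π ∣ 2) {s : ℕ}
    {u : ℤ} (hu : π ^ s ∣ ((u ^ 2 + 1 : ℤ) : ℤ[i])) :
    ∃ w : ℤ, π ^ s ∣ (sqrtd : ℤ[i]) - w := by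
  have hi : (sqrtd : ℤ[i]) * sqrtd = -1 := by ext <;> simp
  have hfactor :
      ((u ^ 2 + 1 : ℤ) : ℤ[i]) = ((u : ℤ[i]) + sqrtd) * ((u : ℤ[i]) - sqrtd) := by
    push_cast
    linear_combination hi
  rw [hfactor] at hu
  by_cases hplus : π ∣ (u : ℤ[i]) + sqrtd
  · have hminus : ¬π ∣ (u : ℤ[i]) - sqrtd := fun hminus => hπ2 <| by
      -- `((u + i) - (u - i)) * (-i) = 2`
      convert (dvd_sub hplus hminus).mul_right (-sqrtd) using 1
      linear_combination 2 * hi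
    refine ⟨-u, ?_⟩
    convert ((hπ.coprime_iff_not_dvd.mpr hminus).pow_left.dvd_of_dvd_mul_right hu) using 1
    push_cast
    ring
  · refine ⟨u, ?_⟩
    rw [← neg_sub]
    exact ((hπ.coprime_iff_not_dvd.mpr hplus).pow_left.dvd_of_dvd_mul_left hu).neg_right

theorem exists_int_dvd_sub_of_dvd_sqrtd_sub {q : ℤ[i]} {w : ℤ}
    (hw : q ∣ (sqrtd : ℤ[i]) - w) (β : ℤ[i]) : ∃ n : ℤ, q ∣ β - n := by
  refine ⟨β.re + β.im * w, ?_⟩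
  have : β - ((β.re + β.im * w : ℤ) : ℤ[i]) = β.im * ((sqrtd : ℤ[i]) - w) := by
    ext <;> simp
  exact this ▸ hw.mul_left _

theorem exists_int_pow_dvd_sub {p : ℕ} (hp : p.Prime) (hp1 : p % 4 = 1) {π : ℤ[i]}
    (hπ : Prime π) (hπp : π ∣ p) (s : ℕ) (β : ℤ[i]) : ∃ n : ℤ, π ^ s ∣ β - n := by
  have : Fact p.Prime := ⟨hp⟩
  obtain ⟨u, hu⟩ := Int.exists_sq_add_one_dvd_prime_pow hp1 s
  have hπs : π ^ s ∣ ((u ^ 2 + 1 : ℤ) : ℤ[i]) :=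
    (pow_dvd_pow_of_dvd hπp s).trans (by exact_mod_cast Int.cast_dvd_cast _ _ hu)
  obtain ⟨w, hw⟩ := exists_int_pow_dvd_sqrtd_sub hπ
    (not_dvd_two_of_dvd_odd_prime hp (by omega) hπ.not_isUnit hπp) hπs
  exact exists_int_dvd_sub_of_dvd_sqrtd_sub hw β

end GaussianInt

theorem IsCoprime.exists_int_dvd_add_mul_sub {R : Type*} [CommRing R] {q δ : R}
    (h : IsCoprime q δ) (hq : ∀ β : R, ∃ n : ℤ, q ∣ β - n) (α γ : R) :
    ∃ n : ℤ, q ∣ α + n * δ - γ := by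
  obtain ⟨x, y, hxy⟩ := h
  obtain ⟨n, hn⟩ := hq (y * (γ - α))
  refine ⟨n, ?_⟩
  have : α + n * δ - γ = -((y * (γ - α) - n) * δ) - x * (γ - α) * q := by
    linear_combination (γ - α) * hxy
  rw [this]
  exact dvd_sub (hn.mul_right δ).neg_right (dvd_mul_left q _)

theorem Prime.pow_dvd_and_not_pow_succ_dvd_of_pow_succ_dvd_sub {R : Type*} [CommRing R]
    [IsDomain R] {π x : R} (hπ : Prime π) {r : ℕ} (h : π ^ (r + 1) ∣ x - π ^ r) :
    π ^ r ∣ x ∧ ¬π ^ (r + 1) ∣ x := by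
  have hr : π ^ r ∣ x - π ^ r := (pow_dvd_pow π r.le_succ).trans h
  refine ⟨by simpa using dvd_add hr (dvd_refl (π ^ r)), fun hx => ?_⟩
  have : π ^ (r + 1) ∣ π ^ r := by simpa using dvd_sub hx h
  exact absurd ((pow_dvd_pow_iff hπ.ne_zero hπ.not_isUnit).mp this) (by omega)

theorem gaussian_line_exact_power_one_mod_four_general
    (a b c d : ℤ)
    (hcop : IsCoprime (⟨a, b⟩ : GaussianInt) (⟨c, d⟩ : GaussianInt))
    (p : ℕ) (hp : p.Prime) (hp1 : p % 4 = 1)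
    (π : GaussianInt) (hπ : Prime π) (hover : π ∣ (p : GaussianInt))
    (k : ℕ) (hk : 1 ≤ k) (m : ℤ)
    (hdvd : π ^ k ∣ ((⟨a, b⟩ : GaussianInt) + (m : GaussianInt) * ⟨c, d⟩)) :
    ∀ r : ℕ, 1 ≤ r → ∃ n : ℤ,
      π ^ r ∣ ((⟨a, b⟩ : GaussianInt) + (n : GaussianInt) * ⟨c, d⟩) ∧
      ¬ π ^ (r + 1) ∣ ((⟨a, b⟩ : GaussianInt) + (n : GaussianInt) * ⟨c, d⟩) := by
  intro r _
  have hπδ : ¬π ∣ ⟨c, d⟩ := fun hπδ => hπ.not_isUnit <|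
    (hcop.add_mul_right_left m).isUnit_of_dvd' ((dvd_pow_self π (by omega)).trans hdvd) hπδ
  obtain ⟨n, hn⟩ := (hπ.coprime_iff_not_dvd.mpr hπδ).pow_left.exists_int_dvd_add_mul_sub
    (GaussianInt.exists_int_pow_dvd_sub hp hp1 hπ hover (r + 1)) ⟨a, b⟩ (π ^ r)
  exact ⟨n, hπ.pow_dvd_and_not_pow_succ_dvd_of_pow_succ_dvd_sub hn⟩

/-- on a primitive Gaussian line with `Δ ≠ 0`, if a Gaussian prime `π` lying
over a rational prime `p ≡ 1 (mod 4)` satisfies `π^k ∣ α_m` for some `k ≥ 1`, then every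
power `π^r` (r ≥ 1) exactly divides some Gaussian integer on the line. -/
theorem gaussian_line_exact_power_one_mod_four
    (a b c d : ℤ) (hcd : Int.gcd c d = 1)
    (hcop : IsCoprime (⟨a, b⟩ : GaussianInt) (⟨c, d⟩ : GaussianInt))
    (hΔ : a * d - b * c ≠ 0)
    (p : ℕ) (hp : p.Prime) (hp1 : p % 4 = 1)
    (π : GaussianInt) (hπ : Prime π) (hover : π ∣ (p : GaussianInt))
    (k : ℕ) (hk : 1 ≤ k) (m : ℤ)
    (hdvd : π ^ k ∣ ((⟨a, b⟩ : GaussianInt) + (m : GaussianInt) * ⟨c, d⟩)) :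
    ∀ r : ℕ, 1 ≤ r → ∃ n : ℤ,
      π ^ r ∣ ((⟨a, b⟩ : GaussianInt) + (n : GaussianInt) * ⟨c, d⟩) ∧
      ¬ π ^ (r + 1) ∣ ((⟨a, b⟩ : GaussianInt) + (n : GaussianInt) * ⟨c, d⟩) :=
  gaussian_line_exact_power_one_mod_four_general a b c d hcop p hp hp1 π hπ hover k hk m hdvd
end

section
/- Let L be a primitive Gaussian line with Δ ≠ 0, and let π be a Gaussian prime lying over a rational prime p ≡ 1 (mod 4). The following are equivalent: (a) π does not divide δ; (b) π^k divides some Gaussian integer on L for some positive integer k; (c) π^r divides some Gaussian integer on L for every positive integer r. -/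
/-!
If `π ∣ δ`, then `π` divides no `α + nδ`, because `α` and `δ` are coprime. If `π ∤ δ`, the
congruence `α + nδ ≡ 0 (mod π^r)` is solvable in `ℤ[i]`, and it remains to see that every
residue class mod `π^r` contains a rational integer. This holds because `π` lies over a split
prime, so `π^r` is coprime to its conjugate: if `w ≡ z (mod π^r)` and `w̄ ≡ 0 (mod π^r)`, then
the rational integer `w + w̄ = 2 Re w` is congruent to `z`.
-/

open Zsqrtd

theorem Nat.coprime_of_squarefree_sq_add_sq {x y : ℕ} (h : Squarefree (x ^ 2 + y ^ 2)) :
    x.Coprime y :=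
  Nat.isUnit_iff.mp <| h _ <| by
    rw [← sq]
    exact dvd_add (pow_dvd_pow_of_dvd (x.gcd_dvd_left y) 2)
      (pow_dvd_pow_of_dvd (x.gcd_dvd_right y) 2)

namespace Zsqrtd

variable {d : ℤ}

theorem add_star_eq_intCast (w : ℤ√d) : w + star w = ((2 * w.re : ℤ) : ℤ√d) := by
  ext <;> simp [two_mul]

theorem exists_int_dvd_sub_of_isCoprime_star {m : ℤ√d} (hm : IsCoprime m (star m)) (z : ℤ√d) :
    ∃ n : ℤ, m ∣ z - n := by
  obtain ⟨u, v, huv⟩ := hm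
  set w := z * v * star m
  refine ⟨2 * w.re, z * u - star z * star v, ?_⟩
  have hw : star w = star z * star v * m := by simp only [w, star_mul', star_star]
  rw [← add_star_eq_intCast, hw]
  linear_combination (-z) * huv

theorem exists_int_dvd_add_mul {m δ : ℤ√d} (hm : IsCoprime m (star m)) (hδ : IsCoprime m δ)
    (α : ℤ√d) : ∃ n : ℤ, m ∣ α + n * δ := by
  obtain ⟨u, v, huv⟩ := hδ
  obtain ⟨n, hn⟩ := exists_int_dvd_sub_of_isCoprime_star hm (-α * v)
  refine ⟨n, ?_⟩
  have key : α + n * δ = m * (α * u) - (-α * v - n) * δ := by linear_combination (-α) * huv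
  rw [key]
  exact (dvd_mul_right m _).sub (hn.mul_right δ)

end Zsqrtd

namespace GaussianInt

theorem isCoprime_mk_star {x y : ℤ} (hxy : IsCoprime x y)
    (h2 : IsCoprime (2 : ℤ) (x ^ 2 + y ^ 2)) : IsCoprime (⟨x, y⟩ : GaussianInt) (star ⟨x, y⟩) := by
  obtain ⟨s, t, hst⟩ := hxy.map (Int.castRingHom GaussianInt)
  obtain ⟨u, v, huv⟩ := h2.map (Int.castRingHom GaussianInt)
  simp only [Int.coe_castRingHom, Int.cast_add, Int.cast_pow, Int.cast_ofNat] at hst huv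
  rw [star_mk, decompose, decompose, Int.cast_neg]
  set i : GaussianInt := sqrtd
  have hi : i * i = -1 := by simp [i, dmuld]
  -- `z + z̄ = 2x` and `z - z̄ = 2iy`, so `(z, z̄)` contains `2` as well as `z z̄ = x² + y²`.
  refine ⟨u * s - i * u * t + v * (x - i * y), u * s + i * u * t, ?_⟩
  linear_combination (2 * u) * hst + huv - (2 * u * t * y + v * y ^ 2) * hi

theorem isCoprime_star_of_dvd_natCast_of_mod_four_eq_one {p : ℕ} (hp : p.Prime)
    (hp1 : p % 4 = 1) {π : GaussianInt} (hπ : Prime π) (hover : π ∣ (p : GaussianInt)) :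
    IsCoprime π (star π) := by
  have := Fact.mk hp
  obtain ⟨x, y, hxy⟩ := Nat.Prime.sq_add_sq (p := p) (by omega)
  set q : GaussianInt := ⟨x, y⟩
  have hnorm : (x : ℤ) ^ 2 + (y : ℤ) ^ 2 = p := by exact_mod_cast hxy
  have hpq : (p : GaussianInt) = q * star q := by
    have hqnorm : q.norm = p := by
      rw [norm_def, ← hnorm]
      ring
    rw [← norm_eq_mul_conj, hqnorm, Int.cast_natCast]
  have hq : IsCoprime q (star q) := by
    refine isCoprime_mk_star (Nat.isCoprime_iff_coprime.2
      (Nat.coprime_of_squarefree_sq_add_sq (hxy ▸ hp.squarefree))) ?_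
    rw [hnorm]
    exact Nat.isCoprime_iff_coprime.2 (Nat.coprime_two_left.2 (Nat.odd_iff.2 (by omega)))
  refine (hπ.coprime_iff_not_dvd).2 fun hstar => hπ.not_isUnit ?_
  have star_dvd_star {z w : GaussianInt} (h : z ∣ w) : star z ∣ star w := map_dvd (starRingEnd _) h
  rcases hπ.dvd_mul.1 (hpq ▸ hover) with h | h
  · exact hq.isUnit_of_dvd' h (hstar.trans (star_dvd_star h))
  · exact hq.isUnit_of_dvd' (hstar.trans (star_star q ▸ star_dvd_star h)) h

end GaussianInt

theorem IsCoprime.not_dvd_add_mul {R : Type*} [CommRing R] {α δ π : R} (h : IsCoprime α δ)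
    (hπ : ¬IsUnit π) (hδ : π ∣ δ) (x : R) : ¬π ∣ α + x * δ := fun hα =>
  hπ (h.isUnit_of_dvd' ((dvd_add_left (hδ.mul_left x)).1 hα) hδ)

theorem gaussian_line_powers_one_mod_four_tfae_general
    (a b c d : ℤ)
    (hcop : IsCoprime (⟨a, b⟩ : GaussianInt) (⟨c, d⟩ : GaussianInt))
    (p : ℕ) (hp : p.Prime) (hp1 : p % 4 = 1)
    (π : GaussianInt) (hπ : Prime π) (hover : π ∣ (p : GaussianInt)) :
    (¬ π ∣ (⟨c, d⟩ : GaussianInt) ↔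
        ∃ k : ℕ, 1 ≤ k ∧ ∃ n : ℤ,
          π ^ k ∣ ((⟨a, b⟩ : GaussianInt) + (n : GaussianInt) * ⟨c, d⟩)) ∧
      (¬ π ∣ (⟨c, d⟩ : GaussianInt) ↔
        ∀ r : ℕ, 1 ≤ r → ∃ n : ℤ,
          π ^ r ∣ ((⟨a, b⟩ : GaussianInt) + (n : GaussianInt) * ⟨c, d⟩)) := by
  have hstar := GaussianInt.isCoprime_star_of_dvd_natCast_of_mod_four_eq_one hp hp1 hπ hover
  have solvable (hδ : ¬π ∣ ⟨c, d⟩) (r : ℕ) :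
      ∃ n : ℤ, π ^ r ∣ (⟨a, b⟩ : GaussianInt) + n * ⟨c, d⟩ := by
    refine Zsqrtd.exists_int_dvd_add_mul ?_ ((hπ.coprime_iff_not_dvd.2 hδ).pow_left) _
    simpa only [star_pow] using hstar.pow
  have obstructed {k : ℕ} (hk : 1 ≤ k) (n : ℤ)
      (h : π ^ k ∣ (⟨a, b⟩ : GaussianInt) + n * ⟨c, d⟩) : ¬π ∣ ⟨c, d⟩ := fun hδ =>
    hcop.not_dvd_add_mul hπ.not_isUnit hδ _ ((dvd_pow_self π (by omega)).trans h)
  refine ⟨⟨fun hδ => ⟨1, le_rfl, solvable hδ 1⟩, fun ⟨_, hk, n, h⟩ => obstructed hk n h⟩,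
    ⟨fun hδ r _ => solvable hδ r, fun h => ?_⟩⟩
  obtain ⟨n, hn⟩ := h 1 le_rfl
  exact obstructed le_rfl n hn

/-- for a primitive Gaussian line with `Δ ≠ 0` and a Gaussian prime `π`
lying over `p ≡ 1 (mod 4)`, the following are equivalent: (a) `π ∤ δ`; (b) some power
`π^k` (k ≥ 1) divides a Gaussian integer on the line; (c) every power `π^r` divides some
Gaussian integer on the line. -/
theorem gaussian_line_powers_one_mod_four_tfae
    (a b c d : ℤ) (hcd : Int.gcd c d = 1)
    (hcop : IsCoprime (⟨a, b⟩ : GaussianInt) (⟨c, d⟩ : GaussianInt))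
    (hΔ : a * d - b * c ≠ 0)
    (p : ℕ) (hp : p.Prime) (hp1 : p % 4 = 1)
    (π : GaussianInt) (hπ : Prime π) (hover : π ∣ (p : GaussianInt)) :
    (¬ π ∣ (⟨c, d⟩ : GaussianInt) ↔
        ∃ k : ℕ, 1 ≤ k ∧ ∃ n : ℤ,
          π ^ k ∣ ((⟨a, b⟩ : GaussianInt) + (n : GaussianInt) * ⟨c, d⟩)) ∧
      (¬ π ∣ (⟨c, d⟩ : GaussianInt) ↔
        ∀ r : ℕ, 1 ≤ r → ∃ n : ℤ,
          π ^ r ∣ ((⟨a, b⟩ : GaussianInt) + (n : GaussianInt) * ⟨c, d⟩)) :=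
  gaussian_line_powers_one_mod_four_tfae_general a b c d hcop p hp hp1 π hπ hover
end

section
/- Let L be a primitive Gaussian line with Δ ≠ 0, and suppose 1+i does not divide δ. Let 2^s be the exact power of 2 dividing Δ. Then (1+i)^t divides some Gaussian integer on L if and only if 0 ≤ t ≤ 2s+1; moreover, (1+i)^t exactly divides some Gaussian integer on L if and only if 0 ≤ t ≤ 2s+1 and in addition t is even or t = 2s+1. -/
/-!
Multiplying by `conj δ = c - di`, which `1+i` does not divide, does not change divisibility
by powers of the prime `1+i`, and turns the line into `{m + Δ(1-i) : m ∈ P + ℤ·|δ|²}`.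
Since `|δ|²` is odd, `m` runs through every residue class modulo any power of `2`, so the line
may be replaced by `Δ(1-i) + ℤ`. Now `(1+i)^(2k) ∼ 2^k`, so an integer has even `(1+i)`-adic
valuation, whereas `Δ(1-i)` has valuation `2s+1`; the valuation of `m + Δ(1-i)` is therefore
the minimum of the two, and every value in `{0, 2, …, 2s, 2s+1}` occurs.
-/

lemma exists_add_mul_iff_exists_of_periodic {q N : ℤ} (hN : IsCoprime q N) (P : ℤ)
    {p : ℤ → Prop} (hp : ∀ x y, q ∣ x - y → (p x ↔ p y)) :
    (∃ n, p (P + n * N)) ↔ ∃ x, p x := by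
  refine ⟨fun ⟨_, hn⟩ => ⟨_, hn⟩, fun ⟨x, hx⟩ => ?_⟩
  obtain ⟨u, v, huv⟩ := hN
  exact ⟨(x - P) * v, (hp _ _ ⟨(P - x) * u, by linear_combination (x - P) * huv⟩).mpr hx⟩

namespace GaussianInt

local notation "π" => (⟨1, 1⟩ : GaussianInt)

lemma one_add_i_mul_mk (p q : ℤ) : π * ⟨p, q⟩ = ⟨p - q, p + q⟩ := by
  ext <;> simp [Zsqrtd.re_mul, Zsqrtd.im_mul] <;> ring

lemma one_add_i_dvd_iff (z : GaussianInt) : π ∣ z ↔ 2 ∣ z.re + z.im := by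
  constructor
  · rintro ⟨⟨p, q⟩, rfl⟩
    exact ⟨p, by simp only [one_add_i_mul_mk]; ring⟩
  · rintro ⟨k, hk⟩
    exact ⟨⟨k, z.im - k⟩, by rw [one_add_i_mul_mk]; ext <;> simp; omega⟩

lemma prime_one_add_i : Prime π := by
  refine UniqueFactorizationMonoid.irreducible_iff_prime.mp ⟨?_, fun x y hxy => ?_⟩
  · rw [← Zsqrtd.norm_eq_one_iff]; decide
  · have hnorm : (x.norm.natAbs * y.norm.natAbs).Prime := by
      rw [← Int.natAbs_mul, ← Zsqrtd.norm_mul, ← hxy]; decide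
    simp only [← Zsqrtd.norm_eq_one_iff]
    rcases Nat.prime_mul_iff.mp hnorm with ⟨-, h⟩ | ⟨-, h⟩
    · exact Or.inr h
    · exact Or.inl h

lemma associated_one_add_i_pow_two_mul (k : ℕ) : Associated (π ^ (2 * k)) (2 ^ k) := by
  have hsq : π ^ 2 = 2 * ⟨0, 1⟩ := by decide
  rw [pow_mul, hsq]
  exact (associated_mul_unit_left 2 _ (by rw [← Zsqrtd.norm_eq_one_iff]; decide)).pow_pow

lemma one_add_i_pow_two_mul_dvd_iff (k : ℕ) (z : GaussianInt) :
    π ^ (2 * k) ∣ z ↔ 2 ^ k ∣ z.re ∧ 2 ^ k ∣ z.im := by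
  rw [(associated_one_add_i_pow_two_mul k).dvd_iff_dvd_left, ← Zsqrtd.intCast_dvd]
  push_cast
  rfl

lemma one_add_i_pow_two_mul_dvd_intCast_iff (k : ℕ) (m : ℤ) :
    π ^ (2 * k) ∣ (m : GaussianInt) ↔ 2 ^ k ∣ m := by
  simp [one_add_i_pow_two_mul_dvd_iff]

lemma not_one_add_i_pow_two_mul_add_one_dvd_two_pow (k : ℕ) : ¬ π ^ (2 * k + 1) ∣ 2 ^ k := by
  rw [← (associated_one_add_i_pow_two_mul k).dvd_iff_dvd_right,
    pow_dvd_pow_iff prime_one_add_i.ne_zero prime_one_add_i.not_isUnit]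
  omega

lemma one_add_i_pow_two_mul_add_two_dvd_intCast {k : ℕ} {m : ℤ}
    (h : π ^ (2 * k + 1) ∣ (m : GaussianInt)) : π ^ (2 * k + 2) ∣ (m : GaussianInt) := by
  obtain ⟨m', rfl⟩ := (one_add_i_pow_two_mul_dvd_intCast_iff k m).mp
    ((pow_dvd_pow _ (Nat.le_succ _)).trans h)
  obtain ⟨u, hu⟩ := associated_one_add_i_pow_two_mul k
  have hm' : π ∣ (m' : GaussianInt) := by
    rw [Int.cast_mul, Int.cast_pow, Int.cast_ofNat, ← hu, pow_succ, mul_assoc] at h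
    exact Units.dvd_mul_left.mp ((mul_dvd_mul_iff_left (pow_ne_zero _ prime_one_add_i.ne_zero)).mp h)
  obtain ⟨m'', rfl⟩ : 2 ∣ m' := by simpa [one_add_i_dvd_iff] using hm'
  rw [show 2 * k + 2 = 2 * (k + 1) by ring, one_add_i_pow_two_mul_dvd_intCast_iff]
  exact ⟨m'', by ring⟩

lemma one_add_i_pow_dvd_intCast_add_iff {t k : ℕ} (htk : t ≤ k) {m m' : ℤ} (h : 2 ^ k ∣ m - m')
    (z : GaussianInt) : π ^ t ∣ m + z ↔ π ^ t ∣ m' + z := by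
  have hdiff : π ^ t ∣ ((m - m' : ℤ) : GaussianInt) :=
    (pow_dvd_pow _ (by omega)).trans ((one_add_i_pow_two_mul_dvd_intCast_iff k _).mpr h)
  rw [show (m : GaussianInt) + z = ((m - m' : ℤ) : GaussianInt) + (m' + z) by push_cast; ring]
  exact dvd_add_right hdiff

lemma one_add_i_pow_two_mul_add_two_dvd_intCast_add_iff {j : ℕ} {m : ℤ} {z : GaussianInt}
    (hz : π ^ (2 * j + 1) ∣ z) (h : π ^ (2 * j + 1) ∣ m + z) :
    π ^ (2 * j + 2) ∣ m + z ↔ π ^ (2 * j + 2) ∣ z :=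
  dvd_add_right (one_add_i_pow_two_mul_add_two_dvd_intCast ((dvd_add_left hz).mp h))

lemma exists_one_add_i_pow_dvd_intCast_add_iff {s : ℕ} {z : GaussianInt}
    (hz : π ^ (2 * s + 1) ∣ z) (hz' : ¬ π ^ (2 * s + 2) ∣ z) (t : ℕ) :
    (∃ m : ℤ, π ^ t ∣ m + z) ↔ t ≤ 2 * s + 1 := by
  refine ⟨fun ⟨m, hm⟩ => ?_, fun ht => ⟨0, by simpa using (pow_dvd_pow _ ht).trans hz⟩⟩
  by_contra! ht
  have hm' : π ^ (2 * s + 2) ∣ m + z := (pow_dvd_pow _ ht).trans hm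
  exact hz' ((one_add_i_pow_two_mul_add_two_dvd_intCast_add_iff hz
    ((pow_dvd_pow _ (Nat.le_succ _)).trans hm')).mp hm')

lemma exists_one_add_i_pow_exact_dvd_intCast_add_iff {s : ℕ} {z : GaussianInt}
    (hz : π ^ (2 * s + 1) ∣ z) (hz' : ¬ π ^ (2 * s + 2) ∣ z) (t : ℕ) :
    (∃ m : ℤ, π ^ t ∣ m + z ∧ ¬ π ^ (t + 1) ∣ m + z) ↔
      t ≤ 2 * s + 1 ∧ (Even t ∨ t = 2 * s + 1) := by
  constructor
  · rintro ⟨m, hm, hm'⟩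
    have ht := (exists_one_add_i_pow_dvd_intCast_add_iff hz hz' t).mp ⟨m, hm⟩
    refine ⟨ht, ?_⟩
    obtain ⟨j, rfl | rfl⟩ := Nat.even_or_odd' t
    · exact Or.inl (even_two_mul j)
    · refine Or.inr (by_contra fun hne => hm' ?_)
      exact (one_add_i_pow_two_mul_add_two_dvd_intCast_add_iff
        ((pow_dvd_pow _ (by omega)).trans hz) hm).mpr ((pow_dvd_pow _ (by omega)).trans hz)
  · rintro ⟨ht, ⟨j, rfl⟩ | rfl⟩
    · have hj : π ^ (2 * j + 1) ∣ z := (pow_dvd_pow _ (by omega)).trans hz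
      rw [← two_mul]
      refine ⟨2 ^ j, ?_, fun h => not_one_add_i_pow_two_mul_add_one_dvd_two_pow j ?_⟩
      · push_cast
        exact dvd_add (associated_one_add_i_pow_two_mul j).dvd
          ((pow_dvd_pow _ (Nat.le_succ _)).trans hj)
      · exact (dvd_add_left hj).mp (by simpa using h)
    · exact ⟨0, by simpa using hz, by simpa using hz'⟩

lemma one_add_i_pow_exact_dvd_mk_neg {s : ℕ} {Δ : ℤ} (h : 2 ^ s ∣ Δ ∧ ¬ 2 ^ (s + 1) ∣ Δ) :
    π ^ (2 * s + 1) ∣ ⟨Δ, -Δ⟩ ∧ ¬ π ^ (2 * s + 2) ∣ ⟨Δ, -Δ⟩ := by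
  refine ⟨?_, ?_⟩
  · rw [show (⟨Δ, -Δ⟩ : GaussianInt) = Δ * ⟨1, -1⟩ by ext <;> simp, pow_succ]
    exact mul_dvd_mul ((one_add_i_pow_two_mul_dvd_intCast_iff s Δ).mpr h.1)
      ((one_add_i_dvd_iff _).mpr (by simp))
  · rw [show 2 * s + 2 = 2 * (s + 1) by ring, one_add_i_pow_two_mul_dvd_iff]
    exact fun h' => h.2 h'.1

lemma mk_add_intCast_mul_mk_mul_conj (a b c d n : ℤ) :
    ((⟨a, b⟩ : GaussianInt) + n * ⟨c, d⟩) * ⟨c, -d⟩ =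
      ((a * c + b * d - (a * d - b * c) + n * (c ^ 2 + d ^ 2) : ℤ) : GaussianInt) +
        ⟨a * d - b * c, -(a * d - b * c)⟩ := by
  ext <;> simp [Zsqrtd.re_mul, Zsqrtd.im_mul, sq] <;> ring

end GaussianInt

open GaussianInt

theorem gaussian_line_powers_of_one_add_i_general
    (a b c d : ℤ)
    (hδ : ¬ (⟨1, 1⟩ : GaussianInt) ∣ (⟨c, d⟩ : GaussianInt))
    (s : ℕ) (hs : (2 : ℤ) ^ s ∣ (a * d - b * c) ∧ ¬ (2 : ℤ) ^ (s + 1) ∣ (a * d - b * c)) :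
    ∀ t : ℕ,
      ((∃ n : ℤ, (⟨1, 1⟩ : GaussianInt) ^ t ∣
          ((⟨a, b⟩ : GaussianInt) + (n : GaussianInt) * ⟨c, d⟩)) ↔ t ≤ 2 * s + 1) ∧
      ((∃ n : ℤ, (⟨1, 1⟩ : GaussianInt) ^ t ∣
            ((⟨a, b⟩ : GaussianInt) + (n : GaussianInt) * ⟨c, d⟩) ∧
          ¬ (⟨1, 1⟩ : GaussianInt) ^ (t + 1) ∣
            ((⟨a, b⟩ : GaussianInt) + (n : GaussianInt) * ⟨c, d⟩)) ↔
        (t ≤ 2 * s + 1 ∧ (Even t ∨ t = 2 * s + 1))) := by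
  intro t
  obtain ⟨hz, hz'⟩ := one_add_i_pow_exact_dvd_mk_neg hs
  have hconj : ¬ (⟨1, 1⟩ : GaussianInt) ∣ ⟨c, -d⟩ := by
    simpa [one_add_i_dvd_iff, ← even_iff_two_dvd, parity_simps] using hδ
  have hN : IsCoprime ((2 : ℤ) ^ (t + 1)) (c ^ 2 + d ^ 2) := by
    refine (Int.prime_two.coprime_iff_not_dvd.mpr ?_).pow_left
    simpa [one_add_i_dvd_iff, ← even_iff_two_dvd, parity_simps] using hδ
  have hdvd (k : ℕ) (n : ℤ) : (⟨1, 1⟩ : GaussianInt) ^ k ∣ ⟨a, b⟩ + n * ⟨c, d⟩ ↔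
      (⟨1, 1⟩ : GaussianInt) ^ k ∣
        ((a * c + b * d - (a * d - b * c) + n * (c ^ 2 + d ^ 2) : ℤ) : GaussianInt) +
          ⟨a * d - b * c, -(a * d - b * c)⟩ := by
    rw [← mk_add_intCast_mul_mk_mul_conj]
    exact ⟨fun h => h.mul_right _, prime_one_add_i.pow_dvd_of_dvd_mul_right k hconj⟩
  simp only [hdvd]
  refine ⟨(exists_add_mul_iff_exists_of_periodic hN _ fun x y h => ?_).trans
      (exists_one_add_i_pow_dvd_intCast_add_iff hz hz' t),
    (exists_add_mul_iff_exists_of_periodic hN _ fun x y h => ?_).trans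
      (exists_one_add_i_pow_exact_dvd_intCast_add_iff hz hz' t)⟩
  · exact one_add_i_pow_dvd_intCast_add_iff (Nat.le_succ t) h _
  · exact and_congr (one_add_i_pow_dvd_intCast_add_iff (Nat.le_succ t) h _)
      (not_congr (one_add_i_pow_dvd_intCast_add_iff le_rfl h _))

/-- on a primitive Gaussian line with `Δ ≠ 0` and `(1+i) ∤ δ`, letting `2^s`
be the exact power of 2 dividing `Δ`: `(1+i)^t` divides some Gaussian integer on the line
iff `t ≤ 2s+1`, and `(1+i)^t` exactly divides some Gaussian integer on the line iff
`t ≤ 2s+1` and in addition `t` is even or `t = 2s+1`. -/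
theorem gaussian_line_powers_of_one_add_i
    (a b c d : ℤ) (hcd : Int.gcd c d = 1)
    (hcop : IsCoprime (⟨a, b⟩ : GaussianInt) (⟨c, d⟩ : GaussianInt))
    (hΔ : a * d - b * c ≠ 0)
    (hδ : ¬ (⟨1, 1⟩ : GaussianInt) ∣ (⟨c, d⟩ : GaussianInt))
    (s : ℕ) (hs : (2 : ℤ) ^ s ∣ (a * d - b * c) ∧ ¬ (2 : ℤ) ^ (s + 1) ∣ (a * d - b * c)) :
    ∀ t : ℕ,
      ((∃ n : ℤ, (⟨1, 1⟩ : GaussianInt) ^ t ∣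
          ((⟨a, b⟩ : GaussianInt) + (n : GaussianInt) * ⟨c, d⟩)) ↔ t ≤ 2 * s + 1) ∧
      ((∃ n : ℤ, (⟨1, 1⟩ : GaussianInt) ^ t ∣
            ((⟨a, b⟩ : GaussianInt) + (n : GaussianInt) * ⟨c, d⟩) ∧
          ¬ (⟨1, 1⟩ : GaussianInt) ^ (t + 1) ∣
            ((⟨a, b⟩ : GaussianInt) + (n : GaussianInt) * ⟨c, d⟩)) ↔
        (t ≤ 2 * s + 1 ∧ (Even t ∨ t = 2 * s + 1))) :=
  gaussian_line_powers_of_one_add_i_general a b c d hδ s hs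
end

section
/- Let L be a primitive Gaussian line with Δ ≠ 0, and let p be a rational prime with p ≡ 3 (mod 4). Then for any k ≥ 0, p^k exactly divides some Gaussian integer α_n on L (i.e., p^k ∣ α_n and p^{k+1} ∤ α_n in ℤ[i]) if and only if p^k divides Δ. -/
/-!
For a rational integer `m`, divisibility `m ∣ z` in `ℤ[i]` is divisibility of both coordinates,
and the coordinates `(a + n c, b + n d)` of `α_n` satisfy `(a + n c) d - (b + n d) c = Δ`;
so `p ^ k` dividing `α_n` forces `p ^ k ∣ Δ`. Conversely, say `p ∤ c` (one of `c, d` is prime to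
`p`). Then the `n` with `p ^ k ∣ a + n c` form a residue class modulo `p ^ k`, and since replacing
`n` by `n + p ^ k` changes `a + n c` by `p ^ k c`, which `p ^ (k + 1)` does not divide, one of
these two values of `n` gives exact divisibility of the first coordinate. The identity for `Δ`
then also makes `p ^ k` divide the second coordinate.
-/

section LineCongruences

variable {R : Type*} [CommRing R]

theorem dvd_det_of_dvd_add_mul {m a b c d n : R} (ha : m ∣ a + n * c) (hb : m ∣ b + n * d) :
    m ∣ a * d - b * c := by
  have hΔ : a * d - b * c = (a + n * c) * d - (b + n * d) * c := by ring
  exact hΔ ▸ dvd_sub (ha.mul_right d) (hb.mul_right c)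

theorem dvd_add_mul_of_dvd_det {m a b c d n : R} (hmc : IsCoprime m c)
    (hΔ : m ∣ a * d - b * c) (ha : m ∣ a + n * c) : m ∣ b + n * d := by
  have hbc : (b + n * d) * c = (a + n * c) * d - (a * d - b * c) := by ring
  exact hmc.dvd_of_dvd_mul_right (hbc ▸ dvd_sub (ha.mul_right d) hΔ)

theorem IsCoprime.exists_dvd_add_mul {m c : R} (hmc : IsCoprime m c) (a : R) :
    ∃ n, m ∣ a + n * c := by
  obtain ⟨u, v, huv⟩ := hmc
  exact ⟨-(a * v), a * u, by linear_combination -a * huv⟩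

variable [IsDomain R] [IsBezout R]

theorem Prime.exists_pow_dvd_add_mul_and_not_dvd {p c : R} (hp : Prime p) (hpc : ¬ p ∣ c)
    (a : R) (k : ℕ) : ∃ n, p ^ k ∣ a + n * c ∧ ¬ p ^ (k + 1) ∣ a + n * c := by
  obtain ⟨n, hn⟩ := ((hp.coprime_iff_not_dvd.mpr hpc).pow_left (m := k)).exists_dvd_add_mul a
  by_cases hexact : p ^ (k + 1) ∣ a + n * c
  · have hshift : a + (n + p ^ k) * c = (a + n * c) + p ^ k * c := by ring
    refine ⟨n + p ^ k, hshift ▸ dvd_add hn (dvd_mul_right _ _), fun h ↦ hpc ?_⟩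
    have hstep : p ^ k * p ∣ p ^ k * c := by
      rw [← pow_succ, show p ^ k * c = a + (n + p ^ k) * c - (a + n * c) by ring]
      exact dvd_sub h hexact
    exact (mul_dvd_mul_iff_left (pow_ne_zero k hp.ne_zero)).mp hstep
  · exact ⟨n, hn, hexact⟩

theorem Prime.exists_pow_exactly_dvd_line_iff {p a b c d : R} (hp : Prime p)
    (hcd : IsCoprime c d) (k : ℕ) :
    (∃ n, (p ^ k ∣ a + n * c ∧ p ^ k ∣ b + n * d) ∧
        ¬ (p ^ (k + 1) ∣ a + n * c ∧ p ^ (k + 1) ∣ b + n * d)) ↔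
      p ^ k ∣ a * d - b * c := by
  refine ⟨fun ⟨n, ⟨ha, hb⟩, _⟩ ↦ dvd_det_of_dvd_add_mul ha hb, fun hΔ ↦ ?_⟩
  wlog hpc : ¬ p ∣ c generalizing a b c d
  · have hpd : ¬ p ∣ d := fun hpd ↦ hp.not_isUnit (hcd.isUnit_of_dvd' (not_not.mp hpc) hpd)
    have hΔ' : p ^ k ∣ b * c - a * d := by
      simpa only [neg_sub] using hΔ.neg_right
    obtain ⟨n, hdvd, hnot⟩ := this hcd.symm hΔ' hpd
    exact ⟨n, hdvd.symm, fun h ↦ hnot h.symm⟩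
  obtain ⟨n, ha, hnot⟩ := hp.exists_pow_dvd_add_mul_and_not_dvd hpc a k
  have hcop : IsCoprime (p ^ k) c := (hp.coprime_iff_not_dvd.mpr hpc).pow_left
  exact ⟨n, ⟨ha, dvd_add_mul_of_dvd_det hcop hΔ ha⟩, fun h ↦ hnot h.1⟩

end LineCongruences

theorem GaussianInt.natCast_pow_dvd_iff (p k : ℕ) (z : GaussianInt) :
    (p : GaussianInt) ^ k ∣ z ↔ (p : ℤ) ^ k ∣ z.re ∧ (p : ℤ) ^ k ∣ z.im := by
  rw [← Zsqrtd.intCast_dvd]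
  push_cast
  rfl

theorem gaussian_line_exact_power_three_mod_four_general
    (a b c d : ℤ) (hcd : Int.gcd c d = 1)
    (p : ℕ) (hp : p.Prime) (k : ℕ) :
    (∃ n : ℤ, (p : GaussianInt) ^ k ∣
          ((⟨a, b⟩ : GaussianInt) + (n : GaussianInt) * ⟨c, d⟩) ∧
        ¬ (p : GaussianInt) ^ (k + 1) ∣
          ((⟨a, b⟩ : GaussianInt) + (n : GaussianInt) * ⟨c, d⟩)) ↔
      (p : ℤ) ^ k ∣ (a * d - b * c) := by
  simp only [GaussianInt.natCast_pow_dvd_iff, Zsqrtd.re_add, Zsqrtd.im_add, Zsqrtd.re_mul,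
    Zsqrtd.im_mul, Zsqrtd.re_intCast, Zsqrtd.im_intCast, mul_zero, zero_mul, add_zero]
  exact (Nat.prime_iff_prime_int.mp hp).exists_pow_exactly_dvd_line_iff
    (Int.isCoprime_iff_gcd_eq_one.mpr hcd) k

/-- on a primitive Gaussian line with `Δ ≠ 0`, for a rational prime
`p ≡ 3 (mod 4)` and `k ≥ 0`, `p^k` exactly divides some Gaussian integer on the line iff
`p^k ∣ Δ`. -/
theorem gaussian_line_exact_power_three_mod_four
    (a b c d : ℤ) (hcd : Int.gcd c d = 1)
    (hcop : IsCoprime (⟨a, b⟩ : GaussianInt) (⟨c, d⟩ : GaussianInt))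
    (hΔ : a * d - b * c ≠ 0)
    (p : ℕ) (hp : p.Prime) (hp3 : p % 4 = 3) (k : ℕ) :
    (∃ n : ℤ, (p : GaussianInt) ^ k ∣
          ((⟨a, b⟩ : GaussianInt) + (n : GaussianInt) * ⟨c, d⟩) ∧
        ¬ (p : GaussianInt) ^ (k + 1) ∣
          ((⟨a, b⟩ : GaussianInt) + (n : GaussianInt) * ⟨c, d⟩)) ↔
      (p : ℤ) ^ k ∣ (a * d - b * c) :=
  gaussian_line_exact_power_three_mod_four_general a b c d hcd p hp k
end

section
/- Let L be a primitive Gaussian line with α_n = α₀ + nδ and suppose 1+2i divides α₀ and 1-2i divides α₁. Then no Gaussian integer on L is divisible by 5. -/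
/-!
Since `5 = (1 + 2i)(1 - 2i)` with both factors prime, `5 ∣ α₀ + nδ` gives `1 + 2i ∣ α₀ + nδ` and
`1 - 2i ∣ α₁ + (n - 1)δ`. Neither prime divides `δ`, because `δ` is coprime to `α₀` and to
`α₁ = α₀ + δ`, so `1 + 2i ∣ n` and `1 - 2i ∣ n - 1`. Taking norms, `5 ∣ n` and `5 ∣ n - 1`.
-/

open Zsqrtd

namespace Zsqrtd

variable {d : ℤ}

theorem irreducible_of_natAbs_norm_prime {z : ℤ√d} (hz : z.norm.natAbs.Prime) :
    Irreducible z := by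
  refine ⟨fun hu => hz.ne_one (norm_eq_one_iff.mpr hu), fun a b hab => ?_⟩
  have hnorm : z.norm.natAbs = a.norm.natAbs * b.norm.natAbs := by
    rw [hab, norm_mul, Int.natAbs_mul]
  rcases Nat.prime_mul_iff.mp (hnorm ▸ hz) with ⟨-, hb⟩ | ⟨-, ha⟩
  · exact Or.inr (norm_eq_one_iff.mp hb)
  · exact Or.inl (norm_eq_one_iff.mp ha)

theorem norm_dvd_of_dvd_intCast {z : ℤ√d} (hz : Prime z.norm) {m : ℤ} (h : z ∣ (m : ℤ√d)) :
    z.norm ∣ m := by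
  obtain ⟨c, hc⟩ := h
  have hsq : z.norm ∣ m * m := ⟨c.norm, by rw [← norm_intCast, hc, norm_mul]⟩
  exact (hz.dvd_or_dvd hsq).elim id id

end Zsqrtd

theorem GaussianInt.prime_of_natAbs_norm_prime {z : GaussianInt} (hz : z.norm.natAbs.Prime) :
    Prime z :=
  irreducible_iff_prime.mp (irreducible_of_natAbs_norm_prime hz)

theorem Prime.dvd_of_dvd_add_mul {R : Type*} [CommRing R] {p a b n : R} (hp : Prime p)
    (hab : IsCoprime a b) (ha : p ∣ a) (h : p ∣ a + n * b) : p ∣ n := by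
  have hb : ¬ p ∣ b := fun hb => hp.not_isUnit (hab.isUnit_of_dvd' ha hb)
  exact (hp.dvd_or_dvd ((dvd_add_right ha).mp h)).resolve_right hb

theorem gaussian_line_not_div_five_general
    (α₀ δ : GaussianInt) (hcop : IsCoprime α₀ δ)
    (h1 : (⟨1, 2⟩ : GaussianInt) ∣ α₀)
    (h2 : (⟨1, -2⟩ : GaussianInt) ∣ (α₀ + δ)) :
    ∀ n : ℤ, ¬ (5 : GaussianInt) ∣ (α₀ + (n : GaussianInt) * δ) := by
  intro n h5
  have hfactor : (5 : GaussianInt) = ⟨1, 2⟩ * ⟨1, -2⟩ := rfl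
  have hnorm₁ : (⟨1, 2⟩ : GaussianInt).norm = 5 := rfl
  have hnorm₂ : (⟨1, -2⟩ : GaussianInt).norm = 5 := rfl
  have hprime₁ := GaussianInt.prime_of_natAbs_norm_prime (z := ⟨1, 2⟩) (by norm_num [hnorm₁])
  have hprime₂ := GaussianInt.prime_of_natAbs_norm_prime (z := ⟨1, -2⟩) (by norm_num [hnorm₂])
  have hshift : α₀ + (n : GaussianInt) * δ = α₀ + δ + ((n - 1 : ℤ) : GaussianInt) * δ := by
    push_cast; ring
  have hn : (⟨1, 2⟩ : GaussianInt) ∣ (n : GaussianInt) :=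
    hprime₁.dvd_of_dvd_add_mul hcop h1 ((Dvd.intro _ hfactor.symm).trans h5)
  have hn_sub_one : (⟨1, -2⟩ : GaussianInt) ∣ ((n - 1 : ℤ) : GaussianInt) :=
    hprime₂.dvd_of_dvd_add_mul (by simpa using hcop.add_mul_left_left 1) h2
      (hshift ▸ (Dvd.intro_left _ hfactor.symm).trans h5)
  have h5n : (5 : ℤ) ∣ n := hnorm₁ ▸ norm_dvd_of_dvd_intCast (by norm_num [hnorm₁]) hn
  have h5n_sub_one : (5 : ℤ) ∣ n - 1 :=
    hnorm₂ ▸ norm_dvd_of_dvd_intCast (by norm_num [hnorm₂]) hn_sub_one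
  omega

/-- if `1+2i ∣ α₀` and `1-2i ∣ α₁` on a primitive Gaussian line, then no
Gaussian integer on the line is divisible by 5. -/
theorem gaussian_line_not_div_five
    (α₀ δ : GaussianInt) (hcd : Int.gcd δ.re δ.im = 1) (hcop : IsCoprime α₀ δ)
    (h1 : (⟨1, 2⟩ : GaussianInt) ∣ α₀)
    (h2 : (⟨1, -2⟩ : GaussianInt) ∣ (α₀ + δ)) :
    ∀ n : ℤ, ¬ (5 : GaussianInt) ∣ (α₀ + (n : GaussianInt) * δ) :=
  gaussian_line_not_div_five_general α₀ δ hcop h1 h2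
end
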